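/- arXiv:1203.4139 — 6 statements merged into one kernel-verified Lean document; each statement's English description precedes it below -/
import Mathlib

section
/- Let −∞ ≤ a < b < ∞ with μ((a, b)) > 0 and let J = (a − b, ∞) ∩ (inf supp μ, sup supp μ). Then the map W(z) = ∫_{(a, b+z)} |x − c_{a,b+z}|^r dμ(x) is continuous and nondecreasing on J, and for all x, y ∈ J with x < y one has W(x) < W(y) if and only if μ([x + b, y + b]) > 0. -/
open MeasureTheory Set Filter Topology
open scoped ENNReal NNReal

/-- The distortion (quantization error) of order `r` of a quantizer `q` for `μ`,
as an extended nonnegative real: `∫ |x - q x|^r dμ`. -/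
noncomputable def distortionE (μ : Measure ℝ) (q : ℝ → ℝ) (r : ℝ) : ℝ≥0∞ :=
  ∫⁻ x, ENNReal.ofReal (|x - q x| ^ r) ∂μ

/-- The `r`-th moment of `μ` on the set `s` about the point `a`:
`∫_s |x - a|^r dμ`. -/
noncomputable def cellMoment (μ : Measure ℝ) (r : ℝ) (s : Set ℝ) (a : ℝ) : ℝ≥0∞ :=
  ∫⁻ x in s, ENNReal.ofReal (|x - a| ^ r) ∂μ

/-- A (scalar) quantizer: a Borel measurable map `ℝ → ℝ` with countable image. -/
def IsQuantizer (q : ℝ → ℝ) : Prop :=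
  Measurable q ∧ (Set.range q).Countable

/-- An `n`-level Gersho quantizer of order `r` for `μ`:
(G1) exactly `n` codepoints; (G2) every codecell is an interval;
(G3) every codepoint is optimal for its own codecell;
(G4) every codecell contributes `D(μ,q,r)/n` to the distortion. -/
def IsGersho (μ : Measure ℝ) (r : ℝ) (n : ℕ) (q : ℝ → ℝ) : Prop :=
  IsQuantizer q ∧
  (Set.range q).encard = n ∧
  (∀ a ∈ Set.range q, (q ⁻¹' {a}).OrdConnected) ∧
  (∀ a ∈ Set.range q, ∀ b : ℝ, cellMoment μ r (q ⁻¹' {a}) a ≤ cellMoment μ r (q ⁻¹' {a}) b) ∧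
  (∀ a ∈ Set.range q, cellMoment μ r (q ⁻¹' {a}) a = distortionE μ q r / (n : ℝ≥0∞))

/-- The (topological) support of a Borel measure on `ℝ`. -/
def msupp (μ : Measure ℝ) : Set ℝ := {x | ∀ U ∈ nhds x, 0 < μ U}

/-- A probability density `h` is weakly unimodal if it is continuous on its support and
there is `l₀ > 0` such that `{x | h x ≥ l}` is a compact interval for every `l ∈ (0, l₀)`. -/
def WeaklyUnimodal (h : ℝ → ℝ) : Prop :=
  ContinuousOn h (tsupport h) ∧
  ∃ l₀ : ℝ, 0 < l₀ ∧ ∀ l : ℝ, 0 < l → l < l₀ →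
    IsCompact {x | l ≤ h x} ∧ ({x | l ≤ h x}).OrdConnected

/-- The constant `Q(r) = 2^{-r} (1+r)^{-1}`. -/
noncomputable def Qconst (r : ℝ) : ℝ := (2 : ℝ) ^ (-r) * (1 + r)⁻¹

/-- The optimal `n`-th Gersho quantization error for `μ` of order `r`. -/
noncomputable def gershoError (μ : Measure ℝ) (r : ℝ) (n : ℕ) : ℝ :=
  (⨅ q ∈ {q : ℝ → ℝ | IsGersho μ r n q}, distortionE μ q r).toReal

/-- The optimal `n`-th quantization error for `μ` of order `r`. -/
noncomputable def optError (μ : Measure ℝ) (r : ℝ) (n : ℕ) : ℝ :=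
  (⨅ q ∈ {q : ℝ → ℝ | IsQuantizer q ∧ (Set.range q).encard ≤ (n : ℕ∞)},
    distortionE μ q r).toReal

/-- The set `J = (a - b, ∞) ∩ (inf supp μ, sup supp μ)` (endpoints in the extended reals). -/
def Jset (μ : Measure ℝ) (a : EReal) (b : ℝ) : Set ℝ :=
  {z : ℝ | a - (b : EReal) < (z : EReal) ∧
    sInf ((fun t : ℝ => (t : EReal)) '' msupp μ) < (z : EReal) ∧
    (z : EReal) < sSup ((fun t : ℝ => (t : EReal)) '' msupp μ)}

/-- `J_{n,I}`: the codepoints of `q n` whose codecell lies inside `I`. -/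
def Jcells (q : ℕ → ℝ → ℝ) (I : Set ℝ) (n : ℕ) : Set ℝ :=
  {a ∈ Set.range (q n) | (q n) ⁻¹' {a} ⊆ I}

/-!
Write `V(z, w) = ∫_{(a, b+z)} |x - w|^r dμ`, so that `W z = V(z, c z)`. For `x ≤ y` the cell
`(a, b+y)` is `(a, b+x)` plus `[b+x, b+y)`, and optimality of `c x` and `c y` gives
`W x ≤ V(x, c y) ≤ W y ≤ V(y, c x) = W x + ∫_{[b+x, b+y)} |t - c x|^r dμ`.
This gives monotonicity, and strict increase exactly when `[b+x, b+y)` carries mass, since the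
integrand vanishes only at one point and `μ` has no atoms. For continuity at `z₀`, a bound
`|c z| ≤ M` near `z₀` makes the error term at most `∫_{[b+x, b+y)} (|t| + M)^r dμ`, which is small
for short intervals near the atomless point `b + z₀`. Such a bound exists: if some `(a, b+z₁)`
with `z₁ < z₀` has positive mass, then `w ↦ V(z₁, w) ≤ V(z, w)` is coercive; otherwise `W`
vanishes to the left of `z₀`.
-/

def cellIoo (a : EReal) (t : ℝ) : Set ℝ := {x : ℝ | a < (x : EReal) ∧ x < t}

section CellMoment

variable {μ : Measure ℝ} {r : ℝ}

theorem cellMoment_mono_set {s s' : Set ℝ} (h : s ⊆ s') (w : ℝ) :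
    cellMoment μ r s w ≤ cellMoment μ r s' w :=
  lintegral_mono_set h

theorem cellMoment_add_diff {s s' : Set ℝ} (hs : MeasurableSet s) (h : s ⊆ s') (w : ℝ) :
    cellMoment μ r s w + cellMoment μ r (s' \ s) w = cellMoment μ r s' w := by
  unfold cellMoment
  rw [← lintegral_inter_add_sdiff _ s' hs, inter_eq_right.2 h]

theorem cellMoment_of_measure_eq_zero {s : Set ℝ} (hs : μ s = 0) (w : ℝ) :
    cellMoment μ r s w = 0 :=
  setLIntegral_measure_zero _ _ hs

theorem cellMoment_pos [NullSingletonClass μ] {s : Set ℝ} (hs : μ s ≠ 0) (w : ℝ) :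
    0 < cellMoment μ r s w := by
  have hsub : s \ {w} ⊆ (Function.support fun x => ENNReal.ofReal (|x - w| ^ r)) ∩ s :=
    fun x hx => ⟨(ENNReal.ofReal_pos.2 <|
      Real.rpow_pos_of_pos (abs_pos.2 (sub_ne_zero.2 hx.2)) r).ne', hx.1⟩
  rw [cellMoment, lintegral_pos_iff_support (by fun_prop)]
  calc 0 < μ (s \ {w}) := by rwa [measure_sdiff_null (measure_singleton w), pos_iff_ne_zero]
    _ ≤ _ := (measure_mono hsub).trans (Measure.le_restrict_apply _ _)

theorem cellMoment_le_of_abs_le (hr : 0 ≤ r) {s : Set ℝ} {w M : ℝ} (hw : |w| ≤ M) :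
    cellMoment μ r s w ≤ ∫⁻ x in s, ENNReal.ofReal ((|x| + M) ^ r) ∂μ :=
  lintegral_mono fun x => ENNReal.ofReal_le_ofReal <| Real.rpow_le_rpow (abs_nonneg _)
    ((abs_sub _ _).trans (by linarith)) hr

theorem lintegral_ofReal_abs_add_rpow_ne_top [IsFiniteMeasure μ] (hr : 0 < r)
    (hmom : Integrable (fun x => |x| ^ r) μ) {M : ℝ} (hM : 0 ≤ M) :
    ∫⁻ x, ENNReal.ofReal ((|x| + M) ^ r) ∂μ ≠ ∞ := by
  have hp : ENNReal.ofReal r ≠ 0 := by simpa using hr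
  have hid : MemLp id (ENNReal.ofReal r) μ := by
    rw [← integrable_norm_rpow_iff aestronglyMeasurable_id hp ENNReal.ofReal_ne_top]
    simpa [ENNReal.toReal_ofReal hr.le] using hmom
  have := (hid.norm.add (memLp_const M)).integrable_norm_rpow hp ENNReal.ofReal_ne_top
  refine (Integrable.lintegral_lt_top (this.congr ?_)).ne
  exact Eventually.of_forall fun x => by
    simp [ENNReal.toReal_ofReal hr.le, abs_of_nonneg (add_nonneg (abs_nonneg x) hM)]

theorem cellMoment_lt_top [IsFiniteMeasure μ] (hr : 0 < r)
    (hmom : Integrable (fun x => |x| ^ r) μ) (s : Set ℝ) (w : ℝ) :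
    cellMoment μ r s w < ∞ :=
  (cellMoment_le_of_abs_le hr.le le_rfl).trans_lt <| (setLIntegral_le_lintegral _ _).trans_lt
    (lintegral_ofReal_abs_add_rpow_ne_top hr hmom (abs_nonneg w)).lt_top

theorem exists_abs_le_of_cellMoment_le (hr : 0 < r) {s : Set ℝ} (hs : μ s ≠ 0) {C : ℝ≥0∞}
    (hC : C ≠ ∞) : ∃ M, ∀ w, cellMoment μ r s w ≤ C → |w| ≤ M := by
  obtain ⟨m, hm⟩ : ∃ m : ℕ, μ (s ∩ Metric.closedBall 0 m) ≠ 0 := by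
    by_contra! h
    refine hs (measure_mono_null (fun x hx => ?_) (measure_iUnion_null h))
    obtain ⟨m, hm⟩ := exists_nat_ge |x|
    exact mem_iUnion.2 ⟨m, hx, by simpa using hm⟩
  obtain ⟨n, hn⟩ := ENNReal.exists_nat_mul_gt hm hC
  refine ⟨m + (n : ℝ) ^ r⁻¹, fun w hw => ?_⟩
  by_contra! hlt
  refine (hn.trans_le ?_).not_ge hw
  calc (n : ℝ≥0∞) * μ (s ∩ Metric.closedBall 0 m)
      = ∫⁻ _ in s ∩ Metric.closedBall 0 m, ENNReal.ofReal (((n : ℝ) ^ r⁻¹) ^ r) ∂μ := by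
        rw [setLIntegral_const, ← Real.rpow_mul (Nat.cast_nonneg n), inv_mul_cancel₀ hr.ne',
          Real.rpow_one, ENNReal.ofReal_natCast]
    _ ≤ ∫⁻ x in s ∩ Metric.closedBall 0 m, ENNReal.ofReal (|x - w| ^ r) ∂μ := by
        refine setLIntegral_mono (by fun_prop) fun x hx => ENNReal.ofReal_le_ofReal ?_
        have hx : |x| ≤ m := by simpa using hx.2
        refine Real.rpow_le_rpow (by positivity) ?_ hr.le
        linarith [abs_sub_abs_le_abs_sub w x, abs_sub_comm x w]
    _ ≤ cellMoment μ r s w := lintegral_mono_set inter_subset_left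

end CellMoment

section Minimizer

variable {μ : Measure ℝ} {r : ℝ} {s s' : Set ℝ} {w w' : ℝ}

theorem cellMoment_le_of_isMinOn (h : s ⊆ s') (hw : IsMinOn (cellMoment μ r s) univ w) :
    cellMoment μ r s w ≤ cellMoment μ r s' w' :=
  (hw (mem_univ w')).trans (cellMoment_mono_set h w')

theorem cellMoment_le_add_of_isMinOn (hs : MeasurableSet s) (h : s ⊆ s')
    (hw' : IsMinOn (cellMoment μ r s') univ w') :
    cellMoment μ r s' w' ≤ cellMoment μ r s w + cellMoment μ r (s' \ s) w :=
  (hw' (mem_univ w)).trans_eq (cellMoment_add_diff hs h w).symm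

theorem cellMoment_lt_iff_of_isMinOn [NullSingletonClass μ] (hs : MeasurableSet s)
    (h : s ⊆ s') (hw : IsMinOn (cellMoment μ r s) univ w)
    (hw' : IsMinOn (cellMoment μ r s') univ w') (hfin : cellMoment μ r s w' ≠ ∞) :
    cellMoment μ r s w < cellMoment μ r s' w' ↔ 0 < μ (s' \ s) := by
  refine ⟨fun hlt => pos_iff_ne_zero.2 fun h0 => ?_, fun hpos => ?_⟩
  · refine hlt.not_ge ((cellMoment_le_add_of_isMinOn (w := w) hs h hw').trans_eq ?_)
    rw [cellMoment_of_measure_eq_zero h0, add_zero]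
  · calc cellMoment μ r s w ≤ cellMoment μ r s w' := hw (mem_univ w')
      _ < cellMoment μ r s w' + cellMoment μ r (s' \ s) w' :=
        ENNReal.lt_add_right hfin (cellMoment_pos hpos.ne' w').ne'
      _ = cellMoment μ r s' w' := cellMoment_add_diff hs h w'

end Minimizer

section CellIoo

variable {a : EReal}

theorem measurableSet_cellIoo (t : ℝ) : MeasurableSet (cellIoo a t) :=
  (measurableSet_lt measurable_const continuous_coe_real_ereal.measurable).inter measurableSet_Iio

theorem cellIoo_mono : Monotone (cellIoo a) :=
  fun _ _ h _ hx => ⟨hx.1, hx.2.trans_le h⟩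

theorem cellIoo_diff {t : ℝ} (h : a < t) (t' : ℝ) : cellIoo a t' \ cellIoo a t = Ico t t' := by
  ext x
  constructor
  · rintro ⟨⟨hax, hxt'⟩, hx⟩
    exact ⟨not_lt.1 fun hxt => hx ⟨hax, hxt⟩, hxt'⟩
  · rintro ⟨htx, hxt'⟩
    exact ⟨⟨h.trans_le (EReal.coe_le_coe_iff.2 htx), hxt'⟩, fun hx => hx.2.not_ge htx⟩

theorem exists_lt_measure_cellIoo_ne_zero {μ : Measure ℝ} {t : ℝ} (h : μ (cellIoo a t) ≠ 0) :
    ∃ t₁ < t, μ (cellIoo a t₁) ≠ 0 := by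
  by_contra! h0
  refine h (measure_mono_null (fun x hx => ?_)
    (measure_iUnion_null fun n : ℕ => h0 (t - 1 / (n + 1)) (sub_lt_self t Nat.one_div_pos_of_nat)))
  obtain ⟨n, hn⟩ := exists_nat_one_div_lt (sub_pos.2 hx.2)
  exact mem_iUnion.2 ⟨n, hx.1, by linarith⟩

theorem lt_of_mem_Jset {μ : Measure ℝ} {b z : ℝ} (hz : z ∈ Jset μ a b) :
    a < ((b + z : ℝ) : EReal) := by
  rw [EReal.coe_add, add_comm]
  exact (EReal.sub_lt_iff (Or.inl (EReal.coe_ne_bot b)) (Or.inl (EReal.coe_ne_top b))).1 hz.1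

end CellIoo

theorem tendsto_setLIntegral_closedBall {μ : Measure ℝ} [IsFiniteMeasure μ] [NullSingletonClass μ]
    {f : ℝ → ℝ≥0∞} (hf : ∫⁻ x, f x ∂μ ≠ ∞) (t : ℝ) :
    Tendsto (fun δ => ∫⁻ x in Metric.closedBall t δ, f x ∂μ) (𝓝 0) (𝓝 0) := by
  have hcth := tendsto_measure_cthickening_of_isClosed (μ := μ) ⟨1, one_pos, measure_ne_top _ _⟩
    (isClosed_singleton (x := t))
  rw [measure_singleton] at hcth
  exact tendsto_setLIntegral_zero hf <| tendsto_of_tendsto_of_tendsto_of_le_of_le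
    tendsto_const_nhds hcth (fun _ => zero_le)
    fun δ => measure_mono (Metric.closedBall_subset_cthickening_singleton t δ)

theorem uIcc_subset_closedBall (x y : ℝ) : uIcc x y ⊆ Metric.closedBall y (dist x y) := by
  rw [Real.closedBall_eq_Icc, Real.dist_eq]
  exact uIcc_subset_Icc ⟨by linarith [neg_abs_le (x - y)], by linarith [le_abs_self (x - y)]⟩
    ⟨by linarith [abs_nonneg (x - y)], by linarith [abs_nonneg (x - y)]⟩

namespace OptimalCellMoment

variable {μ : Measure ℝ} [IsFiniteMeasure μ] {r : ℝ} {a : EReal} {b : ℝ} {c W : ℝ → ℝ}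
  {J : Set ℝ}

theorem monotoneOn (hr : 0 < r) (hmom : Integrable (fun x => |x| ^ r) μ)
    (hc : ∀ z ∈ J, IsMinOn (cellMoment μ r (cellIoo a (b + z))) univ (c z))
    (hW : ∀ z ∈ J, W z = (cellMoment μ r (cellIoo a (b + z)) (c z)).toReal) :
    MonotoneOn W J := fun x hx y hy hxy => by
  rw [hW x hx, hW y hy]
  exact ENNReal.toReal_mono (cellMoment_lt_top hr hmom _ _).ne
    (cellMoment_le_of_isMinOn (cellIoo_mono (by linarith)) (hc x hx))

theorem lt_iff [NullSingletonClass μ] (hr : 0 < r) (hmom : Integrable (fun x => |x| ^ r) μ)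
    (hJ : ∀ z ∈ J, a < ((b + z : ℝ) : EReal))
    (hc : ∀ z ∈ J, IsMinOn (cellMoment μ r (cellIoo a (b + z))) univ (c z))
    (hW : ∀ z ∈ J, W z = (cellMoment μ r (cellIoo a (b + z)) (c z)).toReal)
    {x y : ℝ} (hx : x ∈ J) (hy : y ∈ J) (hxy : x ≤ y) :
    W x < W y ↔ 0 < μ (Icc (b + x) (b + y)) := by
  have hfin (s : Set ℝ) (w : ℝ) : cellMoment μ r s w ≠ ∞ := (cellMoment_lt_top hr hmom s w).ne
  rw [hW x hx, hW y hy, ENNReal.toReal_lt_toReal (hfin _ _) (hfin _ _),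
    cellMoment_lt_iff_of_isMinOn (measurableSet_cellIoo _) (cellIoo_mono (by linarith)) (hc x hx)
      (hc y hy) (hfin _ _), cellIoo_diff (hJ x hx), measure_congr Ico_ae_eq_Icc]

theorem abs_sub_le (hr : 0 < r) (hmom : Integrable (fun x => |x| ^ r) μ)
    (hJ : ∀ z ∈ J, a < ((b + z : ℝ) : EReal))
    (hc : ∀ z ∈ J, IsMinOn (cellMoment μ r (cellIoo a (b + z))) univ (c z))
    (hW : ∀ z ∈ J, W z = (cellMoment μ r (cellIoo a (b + z)) (c z)).toReal)
    {x y M : ℝ} (hx : x ∈ J) (hy : y ∈ J) (hxy : x ≤ y) (hM : |c x| ≤ M) :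
    |W y - W x| ≤ (∫⁻ t in Ico (b + x) (b + y), ENNReal.ofReal ((|t| + M) ^ r) ∂μ).toReal := by
  have hfin (s : Set ℝ) (w : ℝ) : cellMoment μ r s w ≠ ∞ := (cellMoment_lt_top hr hmom s w).ne
  have hGfin : ∫⁻ t in Ico (b + x) (b + y), ENNReal.ofReal ((|t| + M) ^ r) ∂μ ≠ ∞ :=
    ne_top_of_le_ne_top (lintegral_ofReal_abs_add_rpow_ne_top hr hmom ((abs_nonneg _).trans hM))
      (setLIntegral_le_lintegral _ _)
  have hle : cellMoment μ r (cellIoo a (b + y)) (c y) ≤ cellMoment μ r (cellIoo a (b + x)) (c x) +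
      ∫⁻ t in Ico (b + x) (b + y), ENNReal.ofReal ((|t| + M) ^ r) ∂μ := by
    rw [← cellIoo_diff (hJ x hx)]
    exact (cellMoment_le_add_of_isMinOn (measurableSet_cellIoo _) (cellIoo_mono (by linarith))
      (hc y hy)).trans (add_le_add le_rfl (cellMoment_le_of_abs_le hr.le hM))
  rw [abs_of_nonneg (sub_nonneg.2 (monotoneOn hr hmom hc hW hx hy hxy)), sub_le_iff_le_add',
    hW x hx, hW y hy, ← ENNReal.toReal_add (hfin _ _) hGfin]
  exact ENNReal.toReal_mono (ENNReal.add_ne_top.2 ⟨hfin _ _, hGfin⟩) hle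

theorem exists_eventually_eq_or_abs_le (hr : 0 < r) (hmom : Integrable (fun x => |x| ^ r) μ)
    (hc : ∀ z ∈ J, IsMinOn (cellMoment μ r (cellIoo a (b + z))) univ (c z))
    (hW : ∀ z ∈ J, W z = (cellMoment μ r (cellIoo a (b + z)) (c z)).toReal)
    {z₀ : ℝ} (hz₀ : z₀ ∈ J) :
    ∃ M, |c z₀| ≤ M ∧ ∀ᶠ z in 𝓝[J] z₀, z ≤ z₀ → W z = W z₀ ∨ |c z| ≤ M := by
  by_cases h0 : μ (cellIoo a (b + z₀)) = 0
  · refine ⟨|c z₀|, le_rfl, eventually_mem_nhdsWithin.mono fun z hz hzz₀ => Or.inl ?_⟩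
    rw [hW z hz, hW z₀ hz₀, cellMoment_of_measure_eq_zero h0,
      cellMoment_of_measure_eq_zero (measure_mono_null (cellIoo_mono (by linarith)) h0)]
  obtain ⟨t₁, ht₁, h₁⟩ := exists_lt_measure_cellIoo_ne_zero h0
  obtain ⟨M, hM⟩ := exists_abs_le_of_cellMoment_le hr h₁ (cellMoment_lt_top hr hmom univ 0).ne
  have hbound : ∀ z ∈ J, t₁ ≤ b + z → |c z| ≤ M := fun z hz h => hM _ <|
    calc cellMoment μ r (cellIoo a t₁) (c z)
        ≤ cellMoment μ r (cellIoo a (b + z)) (c z) := cellMoment_mono_set (cellIoo_mono h) _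
      _ ≤ cellMoment μ r (cellIoo a (b + z)) 0 := hc z hz (mem_univ 0)
      _ ≤ cellMoment μ r univ 0 := cellMoment_mono_set (subset_univ _) _
  refine ⟨M, hbound z₀ hz₀ ht₁.le, ?_⟩
  filter_upwards [self_mem_nhdsWithin,
    nhdsWithin_le_nhds (Ioi_mem_nhds (show t₁ - b < z₀ by linarith))] with z hz hz₁ _
  exact Or.inr (hbound z hz (by linarith [mem_Ioi.1 hz₁]))

theorem continuousOn [NullSingletonClass μ] (hr : 0 < r) (hmom : Integrable (fun x => |x| ^ r) μ)
    (hJ : ∀ z ∈ J, a < ((b + z : ℝ) : EReal))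
    (hc : ∀ z ∈ J, IsMinOn (cellMoment μ r (cellIoo a (b + z))) univ (c z))
    (hW : ∀ z ∈ J, W z = (cellMoment μ r (cellIoo a (b + z)) (c z)).toReal) :
    ContinuousOn W J := by
  intro z₀ hz₀
  obtain ⟨M, hM₀, hM⟩ := exists_eventually_eq_or_abs_le hr hmom hc hW hz₀
  set G : ℝ → ℝ≥0∞ := fun t => ENNReal.ofReal ((|t| + M) ^ r)
  have hGfin : ∫⁻ t, G t ∂μ ≠ ∞ :=
    lintegral_ofReal_abs_add_rpow_ne_top hr hmom ((abs_nonneg _).trans hM₀)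
  set tail : ℝ → ℝ := fun z =>
    (∫⁻ t in Metric.closedBall (b + z₀) (dist z z₀), G t ∂μ).toReal
  have htail (x y z : ℝ) (h : Ico (b + x) (b + y) ⊆ uIcc (b + z) (b + z₀)) :
      (∫⁻ t in Ico (b + x) (b + y), G t ∂μ).toReal ≤ tail z :=
    ENNReal.toReal_mono (ne_top_of_le_ne_top hGfin (setLIntegral_le_lintegral _ _))
      (lintegral_mono_set <| h.trans <| by
        simpa only [dist_add_left] using uIcc_subset_closedBall (b + z) (b + z₀))
  have hbound : ∀ᶠ z in 𝓝[J] z₀, dist (W z) (W z₀) ≤ tail z := by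
    filter_upwards [hM, self_mem_nhdsWithin] with z hzM hz
    rcases le_total z z₀ with h | h
    · rcases hzM h with heq | hcz
      · rw [heq, dist_self]
        exact ENNReal.toReal_nonneg
      · rw [dist_comm, Real.dist_eq]
        exact (abs_sub_le hr hmom hJ hc hW hz hz₀ h hcz).trans
          (htail _ _ _ (Ico_subset_Icc_self.trans Icc_subset_uIcc))
    · rw [Real.dist_eq]
      exact (abs_sub_le hr hmom hJ hc hW hz₀ hz h hM₀).trans
        (htail _ _ _ (Ico_subset_Icc_self.trans Icc_subset_uIcc'))
  have hdist : Tendsto (fun z => dist z z₀) (𝓝[J] z₀) (𝓝 0) :=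
    tendsto_iff_dist_tendsto_zero.1 (tendsto_id.mono_left nhdsWithin_le_nhds)
  have hlim : Tendsto tail (𝓝[J] z₀) (𝓝 0) :=
    (ENNReal.tendsto_toReal ENNReal.zero_ne_top).comp
      ((tendsto_setLIntegral_closedBall hGfin _).comp hdist)
  exact tendsto_iff_dist_tendsto_zero.2
    (squeeze_zero' (Eventually.of_forall fun _ => dist_nonneg) hbound hlim)

end OptimalCellMoment

theorem gersho_stmt_2_general (μ : Measure ℝ) [IsProbabilityMeasure μ] [NullSingletonClass μ]
    (r : ℝ) (hr : 1 < r) (hmom : Integrable (fun x => |x| ^ r) μ)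
    (a : EReal) (b : ℝ)
    (c : ℝ → ℝ)
    (hc : ∀ z ∈ Jset μ a b, ∀ w : ℝ,
      cellMoment μ r {x : ℝ | a < (x : EReal) ∧ x < b + z} (c z) ≤
        cellMoment μ r {x : ℝ | a < (x : EReal) ∧ x < b + z} w)
    (W : ℝ → ℝ)
    (hW : ∀ z : ℝ, W z = (cellMoment μ r {x : ℝ | a < (x : EReal) ∧ x < b + z} (c z)).toReal) :
    ContinuousOn W (Jset μ a b) ∧ MonotoneOn W (Jset μ a b) ∧
      ∀ x ∈ Jset μ a b, ∀ y ∈ Jset μ a b, x < y →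
        (W x < W y ↔ 0 < μ (Set.Icc (x + b) (y + b))) := by
  have hr₀ : 0 < r := zero_lt_one.trans hr
  have hJ (z : ℝ) (hz : z ∈ Jset μ a b) : a < ((b + z : ℝ) : EReal) := lt_of_mem_Jset hz
  have hc' (z : ℝ) (hz : z ∈ Jset μ a b) :
      IsMinOn (cellMoment μ r (cellIoo a (b + z))) univ (c z) := isMinOn_univ_iff.2 (hc z hz)
  have hW' (z : ℝ) (_ : z ∈ Jset μ a b) := hW z
  refine ⟨OptimalCellMoment.continuousOn hr₀ hmom hJ hc' hW',
    OptimalCellMoment.monotoneOn hr₀ hmom hc' hW', fun x hx y hy hxy => ?_⟩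
  rw [add_comm x, add_comm y]
  exact OptimalCellMoment.lt_iff hr₀ hmom hJ hc' hW' hx hy hxy.le

theorem gersho_stmt_2 (μ : Measure ℝ) [IsProbabilityMeasure μ] [NullSingletonClass μ]
    (r : ℝ) (hr : 1 < r) (hmom : Integrable (fun x => |x| ^ r) μ)
    (a : EReal) (b : ℝ) (hab : a < (b : EReal))
    (hpos : 0 < μ {x : ℝ | a < (x : EReal) ∧ x < b})
    (c : ℝ → ℝ)
    (hc : ∀ z ∈ Jset μ a b, ∀ w : ℝ,
      cellMoment μ r {x : ℝ | a < (x : EReal) ∧ x < b + z} (c z) ≤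
        cellMoment μ r {x : ℝ | a < (x : EReal) ∧ x < b + z} w)
    (W : ℝ → ℝ)
    (hW : ∀ z : ℝ, W z = (cellMoment μ r {x : ℝ | a < (x : EReal) ∧ x < b + z} (c z)).toReal) :
    ContinuousOn W (Jset μ a b) ∧ MonotoneOn W (Jset μ a b) ∧
      ∀ x ∈ Jset μ a b, ∀ y ∈ Jset μ a b, x < y →
        (W x < W y ↔ 0 < μ (Set.Icc (x + b) (y + b))) :=
  gersho_stmt_2_general μ r hr hmom a b c hc W hW
end

section
/- For every n ∈ ℕ, any two n-level Gersho quantizers of order r for μ have the same distortion: if q, p ∈ 𝒢(n, μ, r) then D(μ, q, r) = D(μ, p, r); hence the optimal n-th Gersho quantization error D^G_{n,r}(μ) = inf{D(μ, q, r) : q ∈ 𝒢(n, μ, r)} is attained by every element of 𝒢(n, μ, r). -/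
open MeasureTheory Set Filter Topology
open scoped ENNReal NNReal

/-!
Some codecell of `p` lies inside a codecell of `q`. Otherwise every codecell of `p`, being an
interval on which `q` is not constant, contains the supremum of a bounded-above codecell of `q`,
so sending such a codecell of `q` to the codecell of `p` containing its supremum is onto. Since
the codecells of `q` cover `ℝ`, one of them is unbounded above, so `p` would have fewer codecells
than `q`. If `P ⊆ Q` are codecells of `p` and `q` with codepoints `b` and `a`, then (G4), (G3)
and monotonicity of the integral in the domain give
`D(p)/n = ∫_P |x - b|^r ≤ ∫_P |x - a|^r ≤ ∫_Q |x - a|^r = D(q)/n`, and symmetry gives equality.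
-/

theorem Set.OrdConnected.subset_Iio_of_notMem {α : Type*} [LinearOrder α] {s : Set α}
    (hs : s.OrdConnected) {y z : α} (hy : y ∈ s) (hz : z ∉ s) (hyz : y < z) : s ⊆ Iio z :=
  fun _ hw => not_le.1 fun hzw => hz (hs.out hy hw ⟨hyz.le, hzw⟩)

section Fibers

variable {α β γ : Type*} [ConditionallyCompleteLinearOrder α] {p : α → β} {q : α → γ}

theorem exists_csSup_fiber_mem_fiber (hpc : ∀ b ∈ range p, (p ⁻¹' {b}).OrdConnected)
    (hqc : ∀ c ∈ range q, (q ⁻¹' {c}).OrdConnected) {x : α}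
    (hx : ¬ p ⁻¹' {p x} ⊆ q ⁻¹' {q x}) :
    ∃ c ∈ range q, BddAbove (q ⁻¹' {c}) ∧ p (sSup (q ⁻¹' {c})) = p x := by
  obtain ⟨w, hwx, hqw⟩ := not_subset.1 hx
  obtain ⟨y, z, hy, hz, hyz, hqyz⟩ : ∃ y z, p y = p x ∧ p z = p x ∧ y < z ∧ q z ≠ q y := by
    rcases lt_or_gt_of_ne (fun h : w = x => hqw (h ▸ rfl)) with h | h
    · exact ⟨w, x, hwx, rfl, h, fun e => hqw e.symm⟩
    · exact ⟨x, w, rfl, hwx, h, hqw⟩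
  have hcell : q ⁻¹' {q y} ⊆ Iio z :=
    (hqc _ (mem_range_self y)).subset_Iio_of_notMem rfl hqyz hyz
  have hbdd : BddAbove (q ⁻¹' {q y}) := ⟨z, fun _ hw => (hcell hw).le⟩
  have hsup : sSup (q ⁻¹' {q y}) ∈ Icc y z :=
    ⟨le_csSup hbdd rfl, csSup_le ⟨y, rfl⟩ fun _ hw => (hcell hw).le⟩
  exact ⟨q y, mem_range_self y, hbdd, (hpc _ (mem_range_self x)).out hy hz hsup⟩

theorem exists_fiber_subset_fiber_of_encard_le [NoMaxOrder α] [Nonempty α]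
    (hq : (range q).Finite) (hpc : ∀ b ∈ range p, (p ⁻¹' {b}).OrdConnected)
    (hqc : ∀ c ∈ range q, (q ⁻¹' {c}).OrdConnected)
    (hle : (range q).encard ≤ (range p).encard) :
    ∃ x, p ⁻¹' {p x} ⊆ q ⁻¹' {q x} := by
  by_contra! h
  set U := {c ∈ range q | BddAbove (q ⁻¹' {c})}
  have hU : U ⊂ range q := by
    refine (sep_subset _ _).ssubset_of_ne fun hUq => not_bddAbove_univ (α := α) ?_
    have hcover : univ = ⋃ c ∈ range q, q ⁻¹' {c} := by
      simp only [biUnion_range, ← preimage_iUnion, iUnion_singleton_eq_range, preimage_range]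
    rw [hcover, hq.bddAbove_biUnion]
    exact fun c hc => (hUq.symm.subset hc).2
  have hpU : range p ⊆ (fun c => p (sSup (q ⁻¹' {c}))) '' U := by
    rintro _ ⟨x, rfl⟩
    obtain ⟨c, hc, hbdd, hsup⟩ := exists_csSup_fiber_mem_fiber hpc hqc (h x)
    exact ⟨c, ⟨hc, hbdd⟩, hsup⟩
  refine lt_irrefl (range q).encard ?_
  calc (range q).encard ≤ (range p).encard := hle
    _ ≤ _ := encard_le_encard hpU
    _ ≤ U.encard := encard_image_le _ _
    _ < (range q).encard := (hq.subset hU.subset).encard_lt_encard hU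

end Fibers

section Gersho

variable {μ : Measure ℝ} {r : ℝ} {n : ℕ} {q p : ℝ → ℝ}

theorem IsGersho.distortionE_div_le (hq : IsGersho μ r n q) (hp : IsGersho μ r n p) :
    distortionE μ p r / n ≤ distortionE μ q r / n := by
  obtain ⟨-, hq_card, hq_cell, -, hq_eq⟩ := hq
  obtain ⟨-, hp_card, hp_cell, hp_opt, hp_eq⟩ := hp
  obtain ⟨x, hsub⟩ := exists_fiber_subset_fiber_of_encard_le
    (finite_of_encard_eq_coe hq_card) hp_cell hq_cell (hq_card.trans hp_card.symm).le
  calc distortionE μ p r / n = cellMoment μ r (p ⁻¹' {p x}) (p x) :=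
        (hp_eq _ (mem_range_self x)).symm
    _ ≤ cellMoment μ r (p ⁻¹' {p x}) (q x) := hp_opt _ (mem_range_self x) _
    _ ≤ cellMoment μ r (q ⁻¹' {q x}) (q x) := lintegral_mono_set hsub
    _ = distortionE μ q r / n := hq_eq _ (mem_range_self x)

theorem IsGersho.distortionE_eq (hn : 0 < n) (hq : IsGersho μ r n q)
    (hp : IsGersho μ r n p) : distortionE μ q r = distortionE μ p r := by
  have hn0 : (n : ℝ≥0∞) ≠ 0 := by exact_mod_cast hn.ne'
  have hdiv := le_antisymm (hp.distortionE_div_le hq) (hq.distortionE_div_le hp)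
  simpa only [ENNReal.div_mul_cancel hn0 (ENNReal.natCast_ne_top n)]
    using congrArg (· * (n : ℝ≥0∞)) hdiv

end Gersho

theorem gersho_stmt_3_general (μ : Measure ℝ)
    (r : ℝ)
    (n : ℕ) (hn : 0 < n) (q p : ℝ → ℝ)
    (hq : IsGersho μ r n q) (hp : IsGersho μ r n p) :
    distortionE μ q r = distortionE μ p r ∧
      (distortionE μ q r).toReal = gershoError μ r n := by
  refine ⟨hq.distortionE_eq hn hp, ?_⟩
  have hinf : ⨅ q' ∈ {q' : ℝ → ℝ | IsGersho μ r n q'}, distortionE μ q' r = distortionE μ q r :=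
    le_antisymm (iInf₂_le q hq) (le_iInf₂ fun _ hq' => (hq.distortionE_eq hn hq').le)
  rw [gershoError, hinf]

theorem gersho_stmt_3 (μ : Measure ℝ) [IsProbabilityMeasure μ] [NullSingletonClass μ]
    (r : ℝ) (hr : 1 < r) (hmom : Integrable (fun x => |x| ^ r) μ)
    (n : ℕ) (hn : 0 < n) (q p : ℝ → ℝ)
    (hq : IsGersho μ r n q) (hp : IsGersho μ r n p) :
    distortionE μ q r = distortionE μ p r ∧
      (distortionE μ q r).toReal = gershoError μ r n :=
  gersho_stmt_3_general μ r n hn q p hq hp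
end

section
/- Let μ be absolutely continuous with weakly unimodal density, r > 1, (q_n)_{n∈ℕ} the sequence of n-level Gersho quantizers of order r for μ, and I = [u, v] a compact interval with μ(I) > 0. Then the number n₂^I(n) = card{c ∈ q_n(ℝ) : q_n⁻¹(c) ⊆ ℝ \ (u, v)} of codecells located outside (u, v) is nondecreasing in n: n₂^I(n + 1) ≥ n₂^I(n) for every n ∈ ℕ. -/
open MeasureTheory Set Filter Topology
open scoped ENNReal NNReal

/-!
Write `δ` for the common per-cell distortion `D(μ, q, r) / n` of a Gersho quantizer. The heart of
the proof is a comparison: if `δ₂ ≤ δ₁` (strictly, or with `μ`-mass to the right of `x`), a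
quantizer with per-cell distortion `δ₂` has at least as many cells inside `(-∞, x]` as one with
`δ₁`. This goes by induction over the cells of the first quantizer, from the left: were its
rightmost cell `C` in `(-∞, x]` covered, up to a null set, by the cell `D` of the second
quantizer that contains `x` and reaches beyond it, the codepoint of `D` would serve `C` at cost
`≤ δ₂ ≤ δ₁`, contradicting the optimality of the codepoint of `C` unless `D \ C` is null, which
a density with interval support forbids. Comparing `q (n + 1)` with `q n` first gives
`δ_{n+1} < δ_n`, then the monotonicity of the number of cells in `(-∞, u]` and, by reflection,
in `[v, ∞)`; the cells outside `(u, v)` are exactly the cells of these two kinds.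
-/

def cellsIn {α β : Type*} (q : α → β) (s : Set α) : Set β :=
  {a ∈ range q | q ⁻¹' {a} ⊆ s}

theorem cellsIn_empty {α β : Type*} (q : α → β) : cellsIn q ∅ = ∅ :=
  eq_empty_of_forall_notMem fun _ ⟨⟨w, hw⟩, hsub⟩ => hsub (show q w = _ from hw)

theorem ncard_cellsIn_Iic_lt_ncard_range {α β : Type*} [Preorder α] [NoMaxOrder α] {q : α → β}
    (hfin : (range q).Finite) (x : α) : (cellsIn q (Iic x)).ncard < (range q).ncard := by
  obtain ⟨y, hxy⟩ := exists_gt x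
  refine ncard_lt_ncard ⟨sep_subset _ _, fun h => ?_⟩ hfin
  exact not_le_of_gt hxy ((h (mem_range_self y)).2 rfl)

section Order

variable {α β : Type*} [LinearOrder α]

theorem Set.OrdConnected.forall_lt_of_disjoint {s t : Set α} (hs : s.OrdConnected)
    (ht : t.OrdConnected) (hst : Disjoint s t) {p p' : α} (hp : p ∈ s) (hp' : p' ∈ t)
    (hpp' : p < p') : ∀ a ∈ s, ∀ b ∈ t, a < b := by
  intro a ha b hb
  by_contra! hba
  rcases le_or_gt p b with hpb | hbp
  · exact hst.ne_of_mem (hs.out hp ha ⟨hpb, hba⟩) hb rfl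
  · exact hst.ne_of_mem hp (ht.out hb hp' ⟨hbp.le, hpp'.le⟩) rfl

theorem Set.OrdConnected.subset_Iic_or_subset_Ici [DenselyOrdered α] {s : Set α}
    (hs : s.OrdConnected) {u v : α} (huv : u < v) (hsuv : s ⊆ (Ioo u v)ᶜ) :
    s ⊆ Iic u ∨ s ⊆ Ici v := by
  by_contra! h
  obtain ⟨⟨p, hps, hpu⟩, ⟨w, hws, hwv⟩⟩ := And.intro (not_subset.mp h.1) (not_subset.mp h.2)
  have hpv : v ≤ p := by simpa [not_le.mp hpu] using hsuv hps
  have hwu : w ≤ u := by simpa [not_le.mp hwv] using hsuv hws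
  obtain ⟨m, hum, hmv⟩ := exists_between huv
  exact hsuv (hs.out hws hps ⟨hwu.trans hum.le, hmv.le.trans hpv⟩) ⟨hum, hmv⟩

variable {q : α → β}

theorem cell_subset_Iic_or_eq (hq : ∀ a ∈ range q, (q ⁻¹' {a}).OrdConnected) {w x : α}
    (hwx : w ≤ x) : q ⁻¹' {q w} ⊆ Iic x ∨ q x = q w := by
  refine or_iff_not_imp_left.mpr fun h => ?_
  obtain ⟨z, hz, hzx⟩ := not_subset.mp h
  exact (hq _ (mem_range_self w)).out rfl hz ⟨hwx, (not_le.mp hzx).le⟩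

theorem exists_rightmost_cell [Nonempty α] (hq : ∀ a ∈ range q, (q ⁻¹' {a}).OrdConnected)
    {S : Set β} (hS : S ⊆ range q) (hfin : S.Finite) (hne : S.Nonempty) :
    ∃ c ∈ S, S \ {c} ⊆ cellsIn q (lowerBounds (q ⁻¹' {c})) := by
  obtain ⟨c, hc, hmax⟩ := exists_max_image S (Function.invFun q) hfin hne
  refine ⟨c, hc, fun a ⟨ha, hac⟩ => ⟨hS ha, fun p hp w hw => ?_⟩⟩
  have hqa : q (Function.invFun q a) = a := Function.invFun_eq (hS ha)
  have hqc : q (Function.invFun q c) = c := Function.invFun_eq (hS hc)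
  have hlt : Function.invFun q a < Function.invFun q c :=
    (hmax a ha).lt_of_ne fun h => hac (by rw [← hqa, h, hqc]; rfl)
  exact ((hq a (hS ha)).forall_lt_of_disjoint (hq c (hS hc))
    ((disjoint_singleton.mpr hac).preimage q) hqa hqc hlt p hp w hw).le

end Order

theorem setLIntegral_sdiff_eq_zero {α : Type*} [MeasurableSpace α] {μ : Measure α}
    {f : α → ℝ≥0∞} {s t : Set α} (hs : MeasurableSet s) (ht : MeasurableSet t)
    (hst : μ (s \ t) = 0) (hle : ∫⁻ x in t, f x ∂μ ≤ ∫⁻ x in s, f x ∂μ)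
    (hfin : ∫⁻ x in t, f x ∂μ ≠ ∞) : ∫⁻ x in t \ s, f x ∂μ = 0 := by
  have hs_eq : ∫⁻ x in s, f x ∂μ = ∫⁻ x in t ∩ s, f x ∂μ := by
    rw [← lintegral_inter_add_sdiff f s ht, setLIntegral_measure_zero _ _ hst, add_zero,
      inter_comm]
  have hsplit := lintegral_inter_add_sdiff (μ := μ) f t hs
  have hinter_fin : ∫⁻ x in t ∩ s, f x ∂μ ≠ ∞ :=
    ne_top_of_le_ne_top hfin (lintegral_mono_set inter_subset_left)
  refine le_antisymm ?_ zero_le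
  rw [← ENNReal.add_le_add_iff_left hinter_fin, add_zero, hsplit, ← hs_eq]
  exact hle

theorem cellMoment_eq_zero_iff {μ : Measure ℝ} [NullSingletonClass μ] {r : ℝ} (s : Set ℝ)
    (a : ℝ) : cellMoment μ r s a = 0 ↔ μ s = 0 := by
  rw [cellMoment, lintegral_eq_zero_iff (by fun_prop), ← Measure.restrict_eq_zero]
  refine ⟨fun h => ?_, fun h => by simp [h, Filter.EventuallyEq]⟩
  rw [← ae_eq_bot, ← Filter.eventually_false_iff_eq_bot]
  filter_upwards [h, Measure.ae_ne _ a] with x hx hxa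
  have : 0 < |x - a| ^ r := Real.rpow_pos_of_pos (abs_pos.mpr (sub_ne_zero.mpr hxa)) r
  simp only [Pi.zero_apply, ENNReal.ofReal_eq_zero] at hx
  linarith

/-- (G2)–(G4) with the per-cell distortion `δ = D(μ, q, r) / n` as a parameter and `n` forgotten,
for finitely many cells, each of positive mass. -/
structure IsBalancedQuantizer (μ : Measure ℝ) (r : ℝ) (δ : ℝ≥0∞) (q : ℝ → ℝ) : Prop where
  finite_range : (range q).Finite
  ordConnected : ∀ a ∈ range q, (q ⁻¹' {a}).OrdConnected
  cellMoment_le : ∀ a ∈ range q, ∀ b, cellMoment μ r (q ⁻¹' {a}) a ≤ cellMoment μ r (q ⁻¹' {a}) b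
  cellMoment_eq : ∀ a ∈ range q, cellMoment μ r (q ⁻¹' {a}) a = δ
  measure_pos : ∀ a ∈ range q, 0 < μ (q ⁻¹' {a})
  lt_top : δ < ∞

theorem lintegral_eq_sum_cells {μ : Measure ℝ} {q : ℝ → ℝ} (hfin : (range q).Finite)
    (hmeas : ∀ a ∈ range q, MeasurableSet (q ⁻¹' {a})) (f : ℝ → ℝ≥0∞) :
    ∫⁻ x, f x ∂μ = ∑ a ∈ hfin.toFinset, ∫⁻ x in q ⁻¹' {a}, f x ∂μ := by
  rw [← lintegral_biUnion_finset _ (by simpa using hmeas)]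
  · have hcover : (⋃ y, q ⁻¹' {q y}) = univ :=
      eq_univ_of_forall fun x => mem_iUnion.mpr ⟨x, rfl⟩
    simp [hcover]
  · exact fun a _ b _ hab => (disjoint_singleton.mpr hab).preimage q

section FromGersho

variable {μ : Measure ℝ} {r : ℝ} {n : ℕ} {q : ℝ → ℝ}

theorem IsGersho.finite_range (hG : IsGersho μ r n q) : (range q).Finite :=
  finite_of_encard_eq_coe hG.2.1

theorem IsGersho.ncard_range (hG : IsGersho μ r n q) : (range q).ncard = n := by
  rw [ncard_def, hG.2.1, ENat.toNat_natCast]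

theorem IsGersho.distortionE_le (hG : IsGersho μ r n q) :
    distortionE μ q r ≤ ∫⁻ x, ENNReal.ofReal (|x| ^ r) ∂μ := by
  have hfin := hG.finite_range
  obtain ⟨-, -, hconn, hopt, -⟩ := hG
  have hmeas a (ha : a ∈ range q) := (hconn a ha).measurableSet
  rw [distortionE, lintegral_eq_sum_cells hfin hmeas, lintegral_eq_sum_cells hfin hmeas]
  refine Finset.sum_le_sum fun a ha => ?_
  rw [Finite.mem_toFinset] at ha
  calc ∫⁻ x in q ⁻¹' {a}, ENNReal.ofReal (|x - q x| ^ r) ∂μ = cellMoment μ r (q ⁻¹' {a}) a :=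
        setLIntegral_congr_fun (hmeas a ha) fun x hx => by rw [show q x = a from hx]
    _ ≤ cellMoment μ r (q ⁻¹' {a}) 0 := hopt a ha 0
    _ = ∫⁻ x in q ⁻¹' {a}, ENNReal.ofReal (|x| ^ r) ∂μ := by simp [cellMoment]

theorem IsGersho.isBalancedQuantizer [IsProbabilityMeasure μ] [NullSingletonClass μ]
    (hmom : ∫⁻ x, ENNReal.ofReal (|x| ^ r) ∂μ ≠ ∞) (hn : n ≠ 0) (hG : IsGersho μ r n q) :
    IsBalancedQuantizer μ r (distortionE μ q r / n) q := by
  have hfin := hG.finite_range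
  have hDfin := ne_top_of_le_ne_top hmom hG.distortionE_le
  obtain ⟨-, -, hconn, hopt, heq⟩ := hG
  refine ⟨hfin, hconn, hopt, heq, fun a ha => ?_, ENNReal.div_lt_top hDfin (by exact_mod_cast hn)⟩
  by_contra! hnull
  have hδ : distortionE μ q r / n = 0 := by
    rw [← heq a ha, cellMoment_eq_zero_iff]
    exact nonpos_iff_eq_zero.mp hnull
  have hcells : ∀ b ∈ range q, μ (q ⁻¹' {b}) = 0 := fun b hb =>
    (cellMoment_eq_zero_iff _ _).mp ((heq b hb).trans hδ)
  have huniv := (measure_biUnion_null_iff hfin.countable).mpr hcells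
  rw [biUnion_preimage_singleton, preimage_range] at huniv
  simp at huniv

end FromGersho

def IsGapFree (μ : Measure ℝ) : Prop :=
  ∀ ⦃s t : ℝ⦄, s < t → 0 < μ (Iio s) → 0 < μ (Ioi t) → 0 < μ (Ioo s t)

section Comparison

variable {μ : Measure ℝ} [NullSingletonClass μ] {r : ℝ} {δ₁ δ₂ : ℝ≥0∞} {q₁ q₂ : ℝ → ℝ}

/-- Were `C \ D` null, the codepoint of `D` would serve `C` at cost `≤ δ₂ ≤ δ₁`; equality would
force `D \ C ⊇ (x, z]` to be null, and then the gap-free `μ` has no mass right of `x`. -/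
theorem measure_cell_sdiff_pos (hgap : IsGapFree μ) (G₁ : IsBalancedQuantizer μ r δ₁ q₁)
    (G₂ : IsBalancedQuantizer μ r δ₂ q₂) (hδ : δ₂ ≤ δ₁) {x : ℝ}
    (hx : δ₂ < δ₁ ∨ 0 < μ (Ioi x)) {c : ℝ} (hc : c ∈ range q₁) (hcx : q₁ ⁻¹' {c} ⊆ Iic x)
    (hD : ¬ q₂ ⁻¹' {q₂ x} ⊆ Iic x) : 0 < μ (q₁ ⁻¹' {c} \ q₂ ⁻¹' {q₂ x}) := by
  have hCm : MeasurableSet (q₁ ⁻¹' {c}) := (G₁.ordConnected c hc).measurableSet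
  have hDconn := G₂.ordConnected _ (mem_range_self x)
  obtain ⟨z, hzD, hzx⟩ := not_subset.mp hD
  rw [mem_Iic, not_le] at hzx
  refine pos_iff_ne_zero.mpr fun hCD => ?_
  have hδD : cellMoment μ r (q₂ ⁻¹' {q₂ x}) (q₂ x) = δ₂ :=
    G₂.cellMoment_eq _ (mem_range_self x)
  have hδ₁ : δ₁ ≤ cellMoment μ r (q₁ ⁻¹' {c}) (q₂ x) :=
    (G₁.cellMoment_eq c hc).symm.trans_le (G₁.cellMoment_le c hc _)
  have hCD_le : cellMoment μ r (q₁ ⁻¹' {c}) (q₂ x) ≤ δ₂ :=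
    hδD ▸ lintegral_mono_set' (ae_le_set.mpr hCD)
  have hIoi : 0 < μ (Ioi x) := hx.resolve_left (not_lt.mpr (hδ₁.trans hCD_le))
  have hDC : μ (q₂ ⁻¹' {q₂ x} \ q₁ ⁻¹' {c}) = 0 :=
    (cellMoment_eq_zero_iff _ (q₂ x)).mp <| setLIntegral_sdiff_eq_zero hCm hDconn.measurableSet
      hCD (hδD.trans_le (hδ.trans hδ₁)) (hδD.trans_lt G₂.lt_top).ne
  have hIoc : μ (Ioc x z) = 0 :=
    measure_mono_null (fun w hw => mem_sdiff_of_mem (hDconn.out rfl hzD ⟨hw.1.le, hw.2⟩)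
      fun hwC => not_le_of_gt hw.1 (hcx hwC)) hDC
  have hIio : 0 < μ (Iio x) := by
    rw [measure_congr Iio_ae_eq_Iic]
    exact (G₁.measure_pos c hc).trans_le (measure_mono hcx)
  have hIoi_z : μ (Ioi z) = 0 := by
    by_contra h
    exact (hgap hzx hIio (pos_iff_ne_zero.mpr h)).ne' (measure_mono_null Ioo_subset_Ioc_self hIoc)
  rw [← Ioc_union_Ioi_eq_Ioi hzx.le, measure_union_null hIoc hIoi_z] at hIoi
  exact lt_irrefl 0 hIoi

theorem measure_cell_inter_pos (hgap : IsGapFree μ) (G₁ : IsBalancedQuantizer μ r δ₁ q₁)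
    (G₂ : IsBalancedQuantizer μ r δ₂ q₂) (hδ : δ₂ ≤ δ₁) {x : ℝ}
    (hx : δ₂ < δ₁ ∨ 0 < μ (Ioi x)) {c : ℝ} (hc : c ∈ range q₁) (hcx : q₁ ⁻¹' {c} ⊆ Iic x) :
    0 < μ (q₁ ⁻¹' {c} ∩ {w | q₂ ⁻¹' {q₂ w} ⊆ Iic x}) := by
  by_cases hD : q₂ ⁻¹' {q₂ x} ⊆ Iic x
  · refine (G₁.measure_pos c hc).trans_le (measure_mono fun w hw => ⟨hw, ?_⟩)
    rcases cell_subset_Iic_or_eq G₂.ordConnected (hcx hw) with h | h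
    · exact h
    · exact show q₂ ⁻¹' {q₂ w} ⊆ Iic x by rwa [← h]
  · refine (measure_cell_sdiff_pos hgap G₁ G₂ hδ hx hc hcx hD).trans_le
      (measure_mono fun w ⟨hwC, hwD⟩ => ⟨hwC, ?_⟩)
    exact (cell_subset_Iic_or_eq G₂.ordConnected (hcx hwC)).resolve_right fun h => hwD h.symm

theorem ncard_cellsIn_lt (hgap : IsGapFree μ) (G₁ : IsBalancedQuantizer μ r δ₁ q₁)
    (G₂ : IsBalancedQuantizer μ r δ₂ q₂) (hδ : δ₂ ≤ δ₁) {x : ℝ}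
    (hx : δ₂ < δ₁ ∨ 0 < μ (Ioi x)) {c : ℝ} (hc : c ∈ range q₁) (hcx : q₁ ⁻¹' {c} ⊆ Iic x)
    {s : Set ℝ} (hsx : s ⊆ Iic x) (hs : μ (q₁ ⁻¹' {c} ∩ s) = 0) :
    (cellsIn q₂ s).ncard < (cellsIn q₂ (Iic x)).ncard := by
  have hpos := measure_cell_inter_pos hgap G₁ G₂ hδ hx hc hcx
  rw [← measure_sdiff_null' (measure_mono_null (inter_subset_inter_left _ inter_subset_left) hs)]
    at hpos
  obtain ⟨w, ⟨-, hw⟩, hws⟩ := nonempty_of_measure_ne_zero hpos.ne'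
  refine ncard_lt_ncard ⟨fun a ha => ⟨ha.1, ha.2.trans hsx⟩, fun hsub => hws ?_⟩
    (G₂.finite_range.subset (sep_subset _ _))
  exact (hsub ⟨mem_range_self w, hw⟩).2 rfl

/-- Induction on the number of `q₁`-cells in `(-∞, x]`: removing the rightmost one leaves the
cells left of it, and `ncard_cellsIn_lt` supplies a new `q₂`-cell for the one removed. -/
theorem ncard_cellsIn_Iic_le (hgap : IsGapFree μ) (G₁ : IsBalancedQuantizer μ r δ₁ q₁)
    (G₂ : IsBalancedQuantizer μ r δ₂ q₂) (hδ : δ₂ ≤ δ₁) (x : ℝ)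
    (hx : δ₂ < δ₁ ∨ 0 < μ (Ioi x)) :
    (cellsIn q₁ (Iic x)).ncard ≤ (cellsIn q₂ (Iic x)).ncard := by
  suffices H : ∀ k : ℕ, ∀ x, (δ₂ < δ₁ ∨ 0 < μ (Ioi x)) → (cellsIn q₁ (Iic x)).ncard = k →
      k ≤ (cellsIn q₂ (Iic x)).ncard from H _ x hx rfl
  intro k
  induction k with
  | zero => exact fun _ _ _ => Nat.zero_le _
  | succ k ih =>
    intro x hx hk
    obtain ⟨c, hcS, hleft⟩ := exists_rightmost_cell (S := cellsIn q₁ (Iic x)) G₁.ordConnected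
      (sep_subset _ _) (G₁.finite_range.subset (sep_subset _ _))
      (nonempty_of_ncard_ne_zero (by omega))
    have hc : c ∈ range q₁ := hcS.1
    have hcx : q₁ ⁻¹' {c} ⊆ Iic x := hcS.2
    have ⟨w₀, hw₀⟩ := hc
    set s := lowerBounds (q₁ ⁻¹' {c})
    have hsx : s ⊆ Iic x := fun y hy => (hy hw₀).trans (hcx hw₀)
    have hCs : μ (q₁ ⁻¹' {c} ∩ s) = 0 :=
      Subsingleton.measure_zero (fun a ha b hb => le_antisymm (ha.2 hb.1) (hb.2 ha.1)) μ
    have hs₁ : cellsIn q₁ s = cellsIn q₁ (Iic x) \ {c} := by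
      refine subset_antisymm (fun a ha => ⟨⟨ha.1, ha.2.trans hsx⟩, ?_⟩) hleft
      rintro rfl
      exact (G₁.measure_pos _ ha.1).ne' (measure_mono_null (subset_inter subset_rfl ha.2) hCs)
    have hk₁ : (cellsIn q₁ s).ncard = k := by
      rw [hs₁, ncard_sdiff_singleton_of_mem hcS, hk, Nat.add_sub_cancel]
    have hk₂ : k ≤ (cellsIn q₂ s).ncard := by
      rcases s.eq_empty_or_nonempty with hs | hs
      · rw [hs, cellsIn_empty, ncard_empty] at hk₁
        omega
      obtain ⟨b, hb⟩ : ∃ b, s = Iic b := ⟨_, (isGLB_csInf ⟨w₀, hw₀⟩ hs).lowerBounds_eq⟩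
      rw [hb] at hk₁ hsx ⊢
      have hbx : b ≤ x := hsx self_mem_Iic
      exact ih b (hx.imp_right fun h => h.trans_le (measure_mono (Ioi_subset_Ioi hbx))) hk₁
    have := ncard_cellsIn_lt hgap G₁ G₂ hδ hx hc hcx hsx hCs
    omega

theorem IsBalancedQuantizer.lt_of_ncard_range_lt {δ δ' : ℝ≥0∞} {q q' : ℝ → ℝ}
    (hgap : IsGapFree μ) (G : IsBalancedQuantizer μ r δ q) (G' : IsBalancedQuantizer μ r δ' q')
    (hlt : (range q).ncard < (range q').ncard) : δ' < δ := by
  by_contra! hδ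
  obtain ⟨u, hu, hleft⟩ :=
    exists_rightmost_cell G'.ordConnected subset_rfl G'.finite_range (range_nonempty q')
  have ⟨w, hw⟩ := hu
  have hpos : 0 < (range q).ncard := (ncard_pos G.finite_range).mpr (range_nonempty q)
  obtain ⟨a, ha⟩ : (range q' \ {u}).Nonempty := by
    refine nonempty_of_ncard_ne_zero ?_
    rw [ncard_sdiff_singleton_of_mem hu]
    omega
  obtain ⟨p, hp⟩ := (hleft ha).1
  obtain ⟨b, hb⟩ : ∃ b, lowerBounds (q' ⁻¹' {u}) = Iic b :=
    ⟨_, (isGLB_csInf ⟨w, hw⟩ ⟨p, (hleft ha).2 hp⟩).lowerBounds_eq⟩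
  have hbU : b ∈ lowerBounds (q' ⁻¹' {u}) := hb ▸ self_mem_Iic
  rw [hb] at hleft
  have hIoi : 0 < μ (Ioi b) := by
    rw [measure_congr Ioi_ae_eq_Ici]
    exact (G'.measure_pos u hu).trans_le (measure_mono fun y hy => hbU hy)
  have hcount := ncard_le_ncard hleft (G'.finite_range.subset (sep_subset _ _))
  rw [ncard_sdiff_singleton_of_mem hu] at hcount
  have := ncard_cellsIn_Iic_le hgap G' G hδ b (Or.inr hIoi)
  have := ncard_cellsIn_Iic_lt_ncard_range G.finite_range b
  omega

end Comparison

section Density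

variable {h : ℝ → ℝ}

theorem WeaklyUnimodal.measurable (hwu : WeaklyUnimodal h) : Measurable h := by
  classical
  have hpw : (tsupport h).piecewise h 0 = h := by
    ext x
    by_cases hx : x ∈ tsupport h
    · simp [hx]
    · simp [hx, image_eq_zero_of_notMem_tsupport hx]
  rw [← hpw]
  exact hwu.1.measurable_piecewise continuousOn_const (isClosed_tsupport h).measurableSet

theorem WeaklyUnimodal.ordConnected_pos (hwu : WeaklyUnimodal h) : {x | 0 < h x}.OrdConnected := by
  obtain ⟨-, l₀, hl₀, hl⟩ := hwu
  refine ⟨fun x hx y hy z hz => ?_⟩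
  set l := min (min (h x) (h y)) (l₀ / 2)
  have hl_pos : 0 < l := lt_min (lt_min hx hy) (half_pos hl₀)
  have hl_lt : l < l₀ := (min_le_right _ _).trans_lt (half_lt_self hl₀)
  have hxl : l ≤ h x := (min_le_left _ _).trans (min_le_left _ _)
  have hyl : l ≤ h y := (min_le_left _ _).trans (min_le_right _ _)
  exact hl_pos.trans_le ((hl l hl_pos hl_lt).2.out hxl hyl hz)

theorem isGapFree_withDensity (hwu : WeaklyUnimodal h) :
    IsGapFree (volume.withDensity fun x => ENNReal.ofReal (h x)) := by
  have hpos_iff {s : Set ℝ} : 0 < volume.withDensity (fun x => ENNReal.ofReal (h x)) s ↔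
      0 < volume ({x | 0 < h x} ∩ s) := by
    simp_rw [pos_iff_ne_zero, ne_eq, withDensity_apply_eq_zero hwu.measurable.ennreal_ofReal,
      ENNReal.ofReal_ne_zero_iff]
  intro s t hst hs ht
  obtain ⟨p, hp, hps⟩ := nonempty_of_measure_ne_zero (hpos_iff.mp hs).ne'
  obtain ⟨z, hz, hzt⟩ := nonempty_of_measure_ne_zero (hpos_iff.mp ht).ne'
  rw [hpos_iff, inter_eq_right.mpr fun y hy =>
    hwu.ordConnected_pos.out hp hz ⟨(mem_Iio.mp hps).le.trans hy.1.le, hy.2.le.trans hzt.le⟩,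
    Real.volume_Ioo]
  simpa using hst

end Density

section Reflection

variable {μ : Measure ℝ} {r : ℝ} {δ : ℝ≥0∞} {q : ℝ → ℝ}

instance [NullSingletonClass μ] : NullSingletonClass μ.neg :=
  ⟨fun x => by rw [Measure.neg_apply, neg_singleton, measure_singleton]⟩

theorem IsGapFree.neg (hgap : IsGapFree μ) : IsGapFree μ.neg := by
  intro s t hst hs ht
  simp only [Measure.neg_apply, neg_Iio, neg_Ioi, neg_Ioo] at hs ht ⊢
  exact hgap (neg_lt_neg hst) ht hs

theorem Set.OrdConnected.neg {s : Set ℝ} (hs : s.OrdConnected) : (-s).OrdConnected :=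
  ⟨fun _ hx _ hy _ hz => hs.out hy hx ⟨neg_le_neg hz.2, neg_le_neg hz.1⟩⟩

theorem preimage_neg_comp_neg_singleton (a : ℝ) :
    (fun y => -q (-y)) ⁻¹' {a} = -(q ⁻¹' {-a}) := by
  ext y
  simp [neg_eq_iff_eq_neg]

theorem mem_range_neg_comp_neg {a : ℝ} : a ∈ range (fun y => -q (-y)) ↔ -a ∈ range q :=
  ⟨fun ⟨y, hy⟩ => ⟨-y, by simp [← hy]⟩, fun ⟨y, hy⟩ => ⟨-y, by simp [hy]⟩⟩

theorem cellMoment_neg (s : Set ℝ) (b : ℝ) :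
    cellMoment μ.neg r (-s) b = cellMoment μ r s (-b) := by
  have hneg : (Neg.neg : ℝ → ℝ) = MeasurableEquiv.neg ℝ := rfl
  rw [cellMoment, cellMoment, Measure.neg, hneg, MeasurableEquiv.restrict_map,
    lintegral_map_equiv, ← hneg, neg_preimage, neg_neg]
  congr! 3 with x
  rw [← abs_neg]
  ring_nf

theorem IsBalancedQuantizer.neg (G : IsBalancedQuantizer μ r δ q) :
    IsBalancedQuantizer μ.neg r δ (fun y => -q (-y)) := by
  refine ⟨?_, fun a ha => ?_, fun a ha b => ?_, fun a ha => ?_, fun a ha => ?_, G.lt_top⟩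
  · exact (G.finite_range.image Neg.neg).subset
      (range_subset_iff.mpr fun y => mem_image_of_mem _ (mem_range_self _))
  all_goals rw [mem_range_neg_comp_neg] at ha; rw [preimage_neg_comp_neg_singleton]
  · exact (G.ordConnected _ ha).neg
  · simpa [cellMoment_neg] using G.cellMoment_le _ ha (-b)
  · simpa [cellMoment_neg] using G.cellMoment_eq _ ha
  · simpa [Measure.neg_apply] using G.measure_pos _ ha

theorem ncard_cellsIn_neg (s : Set ℝ) :
    (cellsIn (fun y => -q (-y)) (-s)).ncard = (cellsIn q s).ncard := by
  rw [← ncard_neg (cellsIn q s)]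
  congr 1
  ext a
  simp only [cellsIn, Set.mem_neg, mem_ofPred_eq, mem_range_neg_comp_neg,
    preimage_neg_comp_neg_singleton, neg_subset_neg]

theorem ncard_cellsIn_Ici_le {δ₁ δ₂ : ℝ≥0∞} {q₁ q₂ : ℝ → ℝ} [NullSingletonClass μ]
    (hgap : IsGapFree μ) (G₁ : IsBalancedQuantizer μ r δ₁ q₁)
    (G₂ : IsBalancedQuantizer μ r δ₂ q₂) (hδ : δ₂ ≤ δ₁) (x : ℝ)
    (hx : δ₂ < δ₁ ∨ 0 < μ (Iio x)) :
    (cellsIn q₁ (Ici x)).ncard ≤ (cellsIn q₂ (Ici x)).ncard := by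
  have := ncard_cellsIn_Iic_le hgap.neg G₁.neg G₂.neg hδ (-x)
    (by simpa [Measure.neg_apply] using hx)
  rwa [← neg_Ici, ncard_cellsIn_neg, ncard_cellsIn_neg] at this

end Reflection

theorem ncard_cellsIn_compl_Ioo {α β : Type*} [LinearOrder α] [DenselyOrdered α] {q : α → β}
    (hfin : (range q).Finite) (hq : ∀ a ∈ range q, (q ⁻¹' {a}).OrdConnected) {u v : α}
    (huv : u < v) :
    (cellsIn q (Ioo u v)ᶜ).ncard = (cellsIn q (Iic u)).ncard + (cellsIn q (Ici v)).ncard := by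
  have hsplit : cellsIn q (Ioo u v)ᶜ = cellsIn q (Iic u) ∪ cellsIn q (Ici v) := by
    refine subset_antisymm (fun a ha => ?_) (union_subset ?_ ?_)
    · exact ((hq a ha.1).subset_Iic_or_subset_Ici huv ha.2).imp (⟨ha.1, ·⟩) (⟨ha.1, ·⟩)
    · exact fun a ha => ⟨ha.1, ha.2.trans fun y hy hy' => not_le_of_gt hy'.1 hy⟩
    · exact fun a ha => ⟨ha.1, ha.2.trans fun y hy hy' => not_le_of_gt hy'.2 hy⟩
  have hdisj : Disjoint (cellsIn q (Iic u)) (cellsIn q (Ici v)) := by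
    refine disjoint_left.mpr fun a ⟨⟨w, hw⟩, hu⟩ ⟨_, hv⟩ => ?_
    exact not_le_of_gt huv ((hv (show q w = a from hw)).trans (hu hw))
  rw [hsplit, ncard_union_eq hdisj (hfin.subset (sep_subset _ _)) (hfin.subset (sep_subset _ _))]

theorem gersho_stmt_8_general (μ : Measure ℝ) [IsProbabilityMeasure μ]
    (r : ℝ) (hmom : Integrable (fun x => |x| ^ r) μ)
    (h : ℝ → ℝ)
    (hμ : μ = volume.withDensity (fun x => ENNReal.ofReal (h x)))
    (hwu : WeaklyUnimodal h)
    (q : ℕ → ℝ → ℝ) (hq : ∀ n : ℕ, 0 < n → IsGersho μ r n (q n))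
    (u v : ℝ) (huv : u < v) :
    ∀ n : ℕ, 0 < n →
      {c ∈ Set.range (q n) | (q n) ⁻¹' {c} ⊆ (Set.Ioo u v)ᶜ}.ncard ≤
        {c ∈ Set.range (q (n + 1)) | (q (n + 1)) ⁻¹' {c} ⊆ (Set.Ioo u v)ᶜ}.ncard := by
  intro n hn
  have : NullSingletonClass μ := by rw [hμ]; infer_instance
  have hgap : IsGapFree μ := hμ ▸ isGapFree_withDensity hwu
  have hG m (hm : 0 < m) : IsBalancedQuantizer μ r (distortionE μ (q m) r / m) (q m) :=
    (hq m hm).isBalancedQuantizer hmom.lintegral_lt_top.ne hm.ne'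
  have hδ := (hG n hn).lt_of_ncard_range_lt hgap (hG (n + 1) n.succ_pos)
    (by rw [(hq n hn).ncard_range, (hq (n + 1) n.succ_pos).ncard_range]; omega)
  change (cellsIn (q n) (Ioo u v)ᶜ).ncard ≤ (cellsIn (q (n + 1)) (Ioo u v)ᶜ).ncard
  rw [ncard_cellsIn_compl_Ioo (hG n hn).finite_range (hG n hn).ordConnected huv,
    ncard_cellsIn_compl_Ioo (hG _ n.succ_pos).finite_range (hG _ n.succ_pos).ordConnected huv]
  exact add_le_add (ncard_cellsIn_Iic_le hgap (hG n hn) (hG _ n.succ_pos) hδ.le u (.inl hδ))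
    (ncard_cellsIn_Ici_le hgap (hG n hn) (hG _ n.succ_pos) hδ.le v (.inl hδ))

theorem gersho_stmt_8 (μ : Measure ℝ) [IsProbabilityMeasure μ]
    (r : ℝ) (hr : 1 < r) (hmom : Integrable (fun x => |x| ^ r) μ)
    (h : ℝ → ℝ) (hh0 : ∀ x, 0 ≤ h x)
    (hμ : μ = volume.withDensity (fun x => ENNReal.ofReal (h x)))
    (hwu : WeaklyUnimodal h)
    (q : ℕ → ℝ → ℝ) (hq : ∀ n : ℕ, 0 < n → IsGersho μ r n (q n))
    (u v : ℝ) (huv : u < v) (hI : 0 < μ (Set.Icc u v)) :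
    ∀ n : ℕ, 0 < n →
      {c ∈ Set.range (q n) | (q n) ⁻¹' {c} ⊆ (Set.Ioo u v)ᶜ}.ncard ≤
        {c ∈ Set.range (q (n + 1)) | (q (n + 1)) ⁻¹' {c} ⊆ (Set.Ioo u v)ᶜ}.ncard :=
  gersho_stmt_8_general μ r hmom h hμ hwu q hq u v huv
end

section
/- Let μ be absolutely continuous with weakly unimodal density, r > 1, (q_n)_{n∈ℕ} the sequence of n-level Gersho quantizers of order r for μ, and I a compact interval contained in the interior of supp μ. Then there exists m ∈ ℕ such that for every n ≥ m the set J_{n,I} = {a ∈ q_n(ℝ) : q_n⁻¹(a) ⊆ I} of codepoints whose codecell lies inside I is nonempty. -/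
open MeasureTheory Set Filter Topology
open scoped ENNReal NNReal

/-!
A codecell that is not contained in `[u, v]` but meets its midpoint `w` is an interval, so it
contains `[u, w]` or `[w, v]`. Since these intervals lie in the support of `μ`, a cell containing
one of them has moment about any point at least some fixed `c > 0`. On the other hand, by (G3)
with the competitor `0` and (G4), every cell of `q n` has moment at most `∫ |x|^r dμ / n`, which
is below `c` for large `n`; so for large `n` the cell of `w` lies in `[u, v]`.
-/

lemma measure_Icc_pos_of_Icc_subset_msupp {μ : Measure ℝ} {s t : ℝ} (hst : s < t)
    (hsupp : Icc s t ⊆ msupp μ) : 0 < μ (Icc s t) := by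
  have hmid : (s + t) / 2 ∈ Ioo s t := ⟨by linarith, by linarith⟩
  exact (hsupp (Ioo_subset_Icc_self hmid) _ (isOpen_Ioo.mem_nhds hmid)).trans_le
    (measure_mono Ioo_subset_Icc_self)

lemma ofReal_rpow_mul_measure_le_cellMoment (μ : Measure ℝ) {r d b : ℝ} (hr : 0 ≤ r)
    (hd : 0 ≤ d) {s C : Set ℝ} (hsC : s ⊆ C) (hfar : ∀ x ∈ s, d ≤ |x - b|) :
    ENNReal.ofReal (d ^ r) * μ s ≤ cellMoment μ r C b :=
  calc ENNReal.ofReal (d ^ r) * μ s = ∫⁻ _ in s, ENNReal.ofReal (d ^ r) ∂μ :=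
        (setLIntegral_const s _).symm
    _ ≤ ∫⁻ x in s, ENNReal.ofReal (|x - b| ^ r) ∂μ :=
        setLIntegral_mono (by fun_prop) fun x hx =>
          ENNReal.ofReal_le_ofReal (Real.rpow_le_rpow hd (hfar x hx) hr)
    _ ≤ cellMoment μ r C b := lintegral_mono_set hsC

lemma exists_pos_le_cellMoment_of_Icc_subset {μ : Measure ℝ} {r s t : ℝ} (hr : 0 ≤ r)
    (hst : s < t) (hsupp : Icc s t ⊆ msupp μ) :
    ∃ c > 0, ∀ C : Set ℝ, Icc s t ⊆ C → ∀ b, c ≤ cellMoment μ r C b := by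
  set δ := (t - s) / 4 with hδ_def
  have hδ : 0 < δ := by positivity
  -- whatever `b` is, one of the two end quarters of `[s, t]` lies at distance `≥ δ` from it
  refine ⟨ENNReal.ofReal (δ ^ r) * min (μ (Icc s (s + δ))) (μ (Icc (t - δ) t)), ?_, ?_⟩
  · refine ENNReal.mul_pos (ENNReal.ofReal_pos.2 (Real.rpow_pos_of_pos hδ r)).ne'
      (lt_min ?_ ?_).ne'
    · exact measure_Icc_pos_of_Icc_subset_msupp (by linarith)
        ((Icc_subset_Icc le_rfl (by linarith)).trans hsupp)
    · exact measure_Icc_pos_of_Icc_subset_msupp (by linarith)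
        ((Icc_subset_Icc (by linarith) le_rfl).trans hsupp)
  intro C hC b
  rcases le_or_gt b ((s + t) / 2) with hb | hb
  · refine (mul_le_mul_right (min_le_right _ _) _).trans
      (ofReal_rpow_mul_measure_le_cellMoment μ hr hδ.le
        ((Icc_subset_Icc (by linarith) le_rfl).trans hC) fun x hx => ?_)
    exact (by linarith [hx.1] : δ ≤ x - b).trans (le_abs_self _)
  · refine (mul_le_mul_right (min_le_left _ _) _).trans
      (ofReal_rpow_mul_measure_le_cellMoment μ hr hδ.le
        ((Icc_subset_Icc le_rfl (by linarith)).trans hC) fun x hx => ?_)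
    exact (by linarith [hx.2] : δ ≤ -(x - b)).trans (neg_le_abs _)

lemma lintegral_eq_tsum_setLIntegral_fiber {μ : Measure ℝ} {Q : ℝ → ℝ} (hQ : IsQuantizer Q)
    (f : ℝ → ℝ≥0∞) : ∫⁻ x, f x ∂μ = ∑' a : range Q, ∫⁻ x in Q ⁻¹' {(a : ℝ)}, f x ∂μ := by
  rw [← setLIntegral_univ, ← preimage_range Q, ← biUnion_preimage_singleton,
    lintegral_biUnion hQ.2 (fun a _ => hQ.1 (measurableSet_singleton a))
      (pairwiseDisjoint_fiber Q _)]

lemma distortionE_eq_tsum_cellMoment {μ : Measure ℝ} {Q : ℝ → ℝ} (hQ : IsQuantizer Q) (r : ℝ) :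
    distortionE μ Q r = ∑' a : range Q, cellMoment μ r (Q ⁻¹' {(a : ℝ)}) a := by
  rw [distortionE, lintegral_eq_tsum_setLIntegral_fiber hQ]
  refine tsum_congr fun a =>
    setLIntegral_congr_fun (hQ.1 (measurableSet_singleton _)) fun x hx => ?_
  rw [show Q x = a from hx]

lemma distortionE_le_lintegral {μ : Measure ℝ} {r : ℝ} {Q : ℝ → ℝ} (hQ : IsQuantizer Q)
    (hopt : ∀ a ∈ range Q, ∀ b, cellMoment μ r (Q ⁻¹' {a}) a ≤ cellMoment μ r (Q ⁻¹' {a}) b)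
    (c : ℝ) : distortionE μ Q r ≤ ∫⁻ x, ENNReal.ofReal (|x - c| ^ r) ∂μ := by
  rw [distortionE_eq_tsum_cellMoment hQ, lintegral_eq_tsum_setLIntegral_fiber hQ]
  exact ENNReal.tsum_le_tsum fun a => hopt a a.2 c

lemma IsGersho.cellMoment_le {μ : Measure ℝ} {r : ℝ} {n : ℕ} {q : ℝ → ℝ}
    (hq : IsGersho μ r n q) {a : ℝ} (ha : a ∈ range q) :
    cellMoment μ r (q ⁻¹' {a}) a ≤ (∫⁻ x, ENNReal.ofReal (|x| ^ r) ∂μ) / n := by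
  rw [hq.2.2.2.2 a ha]
  simpa using ENNReal.div_le_div_right (distortionE_le_lintegral hq.1 hq.2.2.2.1 0) _

lemma Set.OrdConnected.Icc_subset_or_Icc_subset {C : Set ℝ} (hC : C.OrdConnected) {u v w : ℝ}
    (hwC : w ∈ C) (hCuv : ¬ C ⊆ Icc u v) : Icc u w ⊆ C ∨ Icc w v ⊆ C := by
  obtain ⟨y, hyC, hy⟩ := not_subset.1 hCuv
  rcases lt_or_ge y u with hyu | hyu
  · exact .inl ((Icc_subset_Icc hyu.le le_rfl).trans (hC.out hyC hwC))
  · have hvy : v < y := lt_of_not_ge fun hyv => hy ⟨hyu, hyv⟩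
    exact .inr ((Icc_subset_Icc le_rfl hvy.le).trans (hC.out hwC hyC))

theorem gersho_stmt_9_general (μ : Measure ℝ)
    (r : ℝ) (hr : 1 < r) (hmom : Integrable (fun x => |x| ^ r) μ)
    (q : ℕ → ℝ → ℝ) (hq : ∀ n : ℕ, 0 < n → IsGersho μ r n (q n))
    (u v : ℝ) (huv : u < v) (hI : Set.Icc u v ⊆ interior (msupp μ)) :
    ∃ m : ℕ, ∀ n ≥ m, (Jcells q (Set.Icc u v) n).Nonempty := by
  have huw : u < (u + v) / 2 := by linarith
  have hwv : (u + v) / 2 < v := by linarith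
  set w := (u + v) / 2
  have hsupp := hI.trans interior_subset
  obtain ⟨c₁, hc₁, hlow₁⟩ := exists_pos_le_cellMoment_of_Icc_subset (μ := μ) (r := r)
    (by linarith) huw ((Icc_subset_Icc le_rfl hwv.le).trans hsupp)
  obtain ⟨c₂, hc₂, hlow₂⟩ := exists_pos_le_cellMoment_of_Icc_subset (μ := μ) (r := r)
    (by linarith) hwv ((Icc_subset_Icc huw.le le_rfl).trans hsupp)
  have hM : ∫⁻ x, ENNReal.ofReal (|x| ^ r) ∂μ ≠ ⊤ :=
    ((hasFiniteIntegral_iff_ofReal (.of_forall fun x => by positivity)).1 hmom.2).ne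
  have hsmall : Tendsto (fun n : ℕ => (∫⁻ x, ENNReal.ofReal (|x| ^ r) ∂μ) / n) atTop (𝓝 0) := by
    simpa using ENNReal.Tendsto.const_div ENNReal.tendsto_nat_nhds_top (.inr hM)
  obtain ⟨m, hm⟩ := eventually_atTop.1
    ((hsmall.eventually (gt_mem_nhds (lt_min hc₁ hc₂))).and (eventually_gt_atTop 0))
  refine ⟨m, fun n hn => ?_⟩
  obtain ⟨hlt, hn0⟩ := hm n hn
  by_contra hJ
  have hcell : ¬ q n ⁻¹' {q n w} ⊆ Icc u v := fun hsub => hJ ⟨q n w, ⟨w, rfl⟩, hsub⟩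
  have hupper := (hq n hn0).cellMoment_le ⟨w, rfl⟩
  rcases ((hq n hn0).2.2.1 _ ⟨w, rfl⟩).Icc_subset_or_Icc_subset rfl hcell with h | h
  · exact (hlow₁ _ h (q n w)).not_gt (hupper.trans_lt (hlt.trans_le (min_le_left _ _)))
  · exact (hlow₂ _ h (q n w)).not_gt (hupper.trans_lt (hlt.trans_le (min_le_right _ _)))

theorem gersho_stmt_9 (μ : Measure ℝ) [IsProbabilityMeasure μ]
    (r : ℝ) (hr : 1 < r) (hmom : Integrable (fun x => |x| ^ r) μ)
    (h : ℝ → ℝ) (hh0 : ∀ x, 0 ≤ h x)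
    (hμ : μ = volume.withDensity (fun x => ENNReal.ofReal (h x)))
    (hwu : WeaklyUnimodal h)
    (q : ℕ → ℝ → ℝ) (hq : ∀ n : ℕ, 0 < n → IsGersho μ r n (q n))
    (u v : ℝ) (huv : u < v) (hI : Set.Icc u v ⊆ interior (msupp μ)) :
    ∃ m : ℕ, ∀ n ≥ m, (Jcells q (Set.Icc u v) n).Nonempty :=
  gersho_stmt_9_general μ r hr hmom q hq u v huv hI
end

section
/- Under the same hypotheses (μ weakly unimodal, r > 1, (q_n) the Gersho quantizer sequence, I ⊆ interior of supp μ compact, and J_{n,I} ≠ ∅ for n ≥ m), the closure T_{n,I} = [inf q_n⁻¹(min J_{n,I}), sup q_n⁻¹(max J_{n,I})] of the union of the codecells contained in I satisfies diam(T_{n,I}) → diam(I) as n → ∞. -/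
open MeasureTheory Set Filter Topology
open scoped ENNReal NNReal

/-!
Fix `ε > 0`. Since `I = [u, v]` lies in the interior of the support, the weakly unimodal density
is bounded below by some `δ > 0` on `I`, so a codecell containing an interval of length `ε` inside
`I` has moment at least `c(ε) > 0` about any point. On the other hand the `n` codecells of `q_n`
contribute equally, and each contributes at most the `r`-th moment of `μ` divided by `n`. Hence
for large `n` a codecell meeting `[u + ε, v - ε]` cannot leave `I` (being an interval, it would
contain `[u, u + ε]` or `[v - ε, v]`), so `[u + ε, v - ε] ⊆ T_{n,I} ⊆ I`.
-/

theorem exists_pos_of_withDensity_pos {α : Type*} [MeasurableSpace α] {ν : Measure α}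
    {h : α → ℝ} {s : Set α} (hs : MeasurableSet s)
    (hpos : 0 < ν.withDensity (fun x => ENNReal.ofReal (h x)) s) : ∃ y ∈ s, 0 < h y := by
  by_contra! hle
  rw [withDensity_apply _ hs, setLIntegral_congr_fun hs fun y hy => ENNReal.ofReal_of_nonpos
    (hle y hy), lintegral_zero] at hpos
  exact hpos.false

theorem measure_Iio_pos_of_mem_interior_msupp {μ : Measure ℝ} {x : ℝ}
    (hx : x ∈ interior (msupp μ)) : 0 < μ (Iio x) := by
  have hsupp : msupp μ ∈ 𝓝[<] x := nhdsWithin_le_nhds (mem_interior_iff_mem_nhds.1 hx)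
  obtain ⟨y, hy, hyx⟩ := Filter.nonempty_of_mem (inter_mem hsupp self_mem_nhdsWithin)
  exact hy _ (isOpen_Iio.mem_nhds hyx)

theorem measure_Ioi_pos_of_mem_interior_msupp {μ : Measure ℝ} {x : ℝ}
    (hx : x ∈ interior (msupp μ)) : 0 < μ (Ioi x) := by
  have hsupp : msupp μ ∈ 𝓝[>] x := nhdsWithin_le_nhds (mem_interior_iff_mem_nhds.1 hx)
  obtain ⟨y, hy, hxy⟩ := Filter.nonempty_of_mem (inter_mem hsupp self_mem_nhdsWithin)
  exact hy _ (isOpen_Ioi.mem_nhds hxy)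

theorem WeaklyUnimodal.exists_pos_le_on_Icc {h : ℝ → ℝ} (hwu : WeaklyUnimodal h) {y₁ y₂ : ℝ}
    (h₁ : 0 < h y₁) (h₂ : 0 < h y₂) : ∃ δ > 0, ∀ x ∈ Icc y₁ y₂, δ ≤ h x := by
  obtain ⟨-, l₀, hl₀, hlevel⟩ := hwu
  obtain ⟨l, hl, hlt⟩ := exists_between (lt_min (lt_min h₁ h₂) hl₀)
  obtain ⟨⟨hl₁, hl₂⟩, hll₀⟩ := (lt_min_iff.1 hlt).imp_left lt_min_iff.1
  obtain ⟨-, hconn⟩ := hlevel l hl hll₀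
  exact ⟨l, hl, fun x hx => hconn.out hl₁.le hl₂.le hx⟩

theorem exists_pos_le_density_on_Icc {h : ℝ → ℝ} (hwu : WeaklyUnimodal h) {u v : ℝ} (huv : u ≤ v)
    (hI : Icc u v ⊆ interior (msupp (volume.withDensity fun x => ENNReal.ofReal (h x)))) :
    ∃ δ > 0, ∀ x ∈ Icc u v, δ ≤ h x := by
  obtain ⟨y₁, hy₁u, hy₁⟩ := exists_pos_of_withDensity_pos measurableSet_Iio
    (measure_Iio_pos_of_mem_interior_msupp (hI (left_mem_Icc.2 huv)))
  obtain ⟨y₂, hvy₂, hy₂⟩ := exists_pos_of_withDensity_pos measurableSet_Ioi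
    (measure_Ioi_pos_of_mem_interior_msupp (hI (right_mem_Icc.2 huv)))
  obtain ⟨δ, hδ, hδh⟩ := hwu.exists_pos_le_on_Icc hy₁ hy₂
  exact ⟨δ, hδ, fun x hx => hδh x (Icc_subset_Icc hy₁u.le hvy₂.le hx)⟩

theorem ofReal_mul_le_withDensity_Icc {h : ℝ → ℝ} {a b δ : ℝ} (hδh : ∀ x ∈ Icc a b, δ ≤ h x) :
    ENNReal.ofReal δ * ENNReal.ofReal (b - a) ≤
      volume.withDensity (fun x => ENNReal.ofReal (h x)) (Icc a b) := by
  rw [withDensity_apply _ measurableSet_Icc, ← Real.volume_Icc, ← setLIntegral_const]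
  exact setLIntegral_mono' measurableSet_Icc fun x hx => ENNReal.ofReal_le_ofReal (hδh x hx)

theorem ofReal_rpow_mul_le_cellMoment {μ : Measure ℝ} {r d a : ℝ} {s cell : Set ℝ} (hr : 0 ≤ r)
    (hd : 0 ≤ d) (hs : MeasurableSet s) (hsc : s ⊆ cell) (hfar : ∀ y ∈ s, d ≤ |y - a|) :
    ENNReal.ofReal (d ^ r) * μ s ≤ cellMoment μ r cell a :=
  calc ENNReal.ofReal (d ^ r) * μ s = ∫⁻ _ in s, ENNReal.ofReal (d ^ r) ∂μ :=
        (setLIntegral_const _ _).symm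
    _ ≤ ∫⁻ y in s, ENNReal.ofReal (|y - a| ^ r) ∂μ :=
        setLIntegral_mono' hs fun y hy =>
          ENNReal.ofReal_le_ofReal (Real.rpow_le_rpow hd (hfar y hy) hr)
    _ ≤ cellMoment μ r cell a := lintegral_mono_set hsc

theorem exists_Icc_subset_Icc_far (a α ε : ℝ) :
    ∃ β, Icc β (β + ε / 4) ⊆ Icc α (α + ε) ∧ ∀ y ∈ Icc β (β + ε / 4), ε / 4 ≤ |y - a| := by
  rcases le_or_gt (α + ε / 2) a with ha | ha
  · refine ⟨α, fun y hy => ⟨hy.1, by linarith [hy.1, hy.2]⟩, fun y hy => ?_⟩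
    rw [abs_sub_comm, abs_of_nonneg (by linarith [hy.1, hy.2])]
    linarith [hy.2]
  · refine ⟨α + 3 * ε / 4, fun y hy => ⟨by linarith [hy.1, hy.2], hy.2.trans_eq (by ring)⟩,
      fun y hy => ?_⟩
    rw [abs_of_nonneg (by linarith [hy.1, hy.2])]
    linarith [hy.1]

theorem le_cellMoment_of_Icc_subset {h : ℝ → ℝ} {r δ α ε a : ℝ} (hr : 0 ≤ r) (hδ : 0 ≤ δ)
    (hε : 0 ≤ ε) (hδh : ∀ x ∈ Icc α (α + ε), δ ≤ h x) {cell : Set ℝ}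
    (hcell : Icc α (α + ε) ⊆ cell) :
    ENNReal.ofReal ((ε / 4) ^ r * (δ * (ε / 4))) ≤
      cellMoment (volume.withDensity fun x => ENNReal.ofReal (h x)) r cell a := by
  obtain ⟨β, hβ, hfar⟩ := exists_Icc_subset_Icc_far a α ε
  have hmass := ofReal_mul_le_withDensity_Icc (h := h) fun x hx => hδh x (hβ hx)
  rw [add_sub_cancel_left] at hmass
  calc ENNReal.ofReal ((ε / 4) ^ r * (δ * (ε / 4)))
      = ENNReal.ofReal ((ε / 4) ^ r) * (ENNReal.ofReal δ * ENNReal.ofReal (ε / 4)) := by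
        rw [ENNReal.ofReal_mul (by positivity), ENNReal.ofReal_mul hδ]
    _ ≤ _ := mul_le_mul_right hmass _
    _ ≤ _ := ofReal_rpow_mul_le_cellMoment hr (by positivity) measurableSet_Icc
        (hβ.trans hcell) hfar

theorem IsGersho.natCast_mul_cellMoment_le {μ : Measure ℝ} {r : ℝ} {n : ℕ} {q : ℝ → ℝ}
    (hg : IsGersho μ r n q) {a : ℝ} (ha : a ∈ range q) :
    (n : ℝ≥0∞) * cellMoment μ r (q ⁻¹' {a}) a ≤ ∫⁻ x, ENNReal.ofReal (|x| ^ r) ∂μ := by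
  obtain ⟨⟨hmeas, -⟩, hcard, -, hopt, heq⟩ := hg
  have hfin : (range q).Finite := finite_of_encard_eq_coe hcard
  have hn : hfin.toFinset.card = n := by
    have : ((hfin.toFinset.card : ℕ) : ℕ∞) = n := by
      rw [← encard_coe_eq_coe_finsetCard, hfin.coe_toFinset, hcard]
    exact_mod_cast this
  have hdisj : (↑hfin.toFinset : Set ℝ).PairwiseDisjoint (fun b => q ⁻¹' {b}) :=
    fun b _ c _ hbc => Disjoint.preimage q (disjoint_singleton.2 hbc)
  have hcover : (⋃ b ∈ hfin.toFinset, q ⁻¹' {b}) = univ :=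
    eq_univ_of_forall fun x => mem_biUnion (hfin.mem_toFinset.2 (mem_range_self x)) rfl
  calc (n : ℝ≥0∞) * cellMoment μ r (q ⁻¹' {a}) a
      = ∑ b ∈ hfin.toFinset, cellMoment μ r (q ⁻¹' {b}) b := by
        rw [Finset.sum_congr rfl fun b hb => heq b (hfin.mem_toFinset.1 hb),
          Finset.sum_const, hn, heq a ha, nsmul_eq_mul]
    _ ≤ ∑ b ∈ hfin.toFinset, cellMoment μ r (q ⁻¹' {b}) 0 :=
        Finset.sum_le_sum fun b hb => hopt b (hfin.mem_toFinset.1 hb) 0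
    _ = ∫⁻ x in ⋃ b ∈ hfin.toFinset, q ⁻¹' {b}, ENNReal.ofReal (|x - 0| ^ r) ∂μ :=
        (lintegral_biUnion_finset hdisj (fun b _ => hmeas (measurableSet_singleton b)) _).symm
    _ = ∫⁻ x, ENNReal.ofReal (|x| ^ r) ∂μ := by
        rw [hcover, setLIntegral_univ]
        simp only [sub_zero]

theorem eventually_cellMoment_lt {μ : Measure ℝ} {r : ℝ}
    (hmom : Integrable (fun x => |x| ^ r) μ) {q : ℕ → ℝ → ℝ}
    (hq : ∀ᶠ n in atTop, IsGersho μ r n (q n)) {c : ℝ≥0∞} (hc : c ≠ 0) :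
    ∀ᶠ n in atTop, ∀ a ∈ range (q n), cellMoment μ r ((q n) ⁻¹' {a}) a < c := by
  obtain ⟨N, hN⟩ := ENNReal.exists_nat_mul_gt hc hmom.lintegral_lt_top.ne
  filter_upwards [hq, eventually_ge_atTop N] with n hg hn a ha
  by_contra! hca
  have hNn : (N : ℝ≥0∞) * c ≤ n * c := mul_le_mul_left (by exact_mod_cast hn) _
  exact (hN.trans_le (hNn.trans (mul_le_mul_right hca _))).not_ge
    (hg.natCast_mul_cellMoment_le ha)

theorem Set.OrdConnected.exists_Icc_subset_inter_of_not_subset {s : Set ℝ}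
    (hs : s.OrdConnected) {u v ε x : ℝ} (hxs : x ∈ s) (hx : x ∈ Icc (u + ε) (v - ε))
    (hsub : ¬ s ⊆ Icc u v) : ∃ α, Icc α (α + ε) ⊆ Icc u v ∩ s := by
  obtain ⟨z, hzs, hz⟩ := not_subset.1 hsub
  obtain ⟨hxu, hxv⟩ := hx
  rcases lt_or_ge z u with hzu | hzu
  · exact ⟨u, fun y hy => ⟨⟨hy.1, by linarith [hy.1, hy.2]⟩,
      hs.out hzs hxs ⟨by linarith [hy.1], by linarith [hy.2]⟩⟩⟩
  · have hvz : v < z := not_le.1 fun hzv => hz ⟨hzu, hzv⟩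
    exact ⟨v - ε, fun y hy => ⟨⟨by linarith [hy.1, hy.2], by linarith [hy.2]⟩,
      hs.out hxs hzs ⟨by linarith [hy.1], by linarith [hy.2]⟩⟩⟩

theorem Icc_subset_biUnion_Jcells {h : ℝ → ℝ} {r : ℝ} (hr : 0 ≤ r) {q : ℕ → ℝ → ℝ} {n : ℕ}
    (hconn : ∀ a ∈ range (q n), ((q n) ⁻¹' {a}).OrdConnected) {u v δ ε : ℝ} (hδ : 0 ≤ δ)
    (hε : 0 ≤ ε) (hδh : ∀ x ∈ Icc u v, δ ≤ h x)
    (hsmall : ∀ a ∈ range (q n), cellMoment (volume.withDensity fun x => ENNReal.ofReal (h x)) r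
      ((q n) ⁻¹' {a}) a < ENNReal.ofReal ((ε / 4) ^ r * (δ * (ε / 4)))) :
    Icc (u + ε) (v - ε) ⊆ ⋃ a ∈ Jcells q (Icc u v) n, (q n) ⁻¹' {a} := by
  intro x hx
  have hcell : (q n) ⁻¹' {q n x} ⊆ Icc u v := by
    by_contra hns
    obtain ⟨α, hα⟩ :=
      (hconn _ (mem_range_self x)).exists_Icc_subset_inter_of_not_subset rfl hx hns
    exact (hsmall _ (mem_range_self x)).not_ge <| le_cellMoment_of_Icc_subset hr hδ hε
      (fun y hy => hδh y (hα hy).1) fun y hy => (hα hy).2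
  exact mem_biUnion (show q n x ∈ Jcells q (Icc u v) n from ⟨mem_range_self x, hcell⟩) rfl

theorem tendsto_diam_closure_of_Icc_subset {ι : Type*} {l : Filter ι} {T : ι → Set ℝ} {u v : ℝ}
    (huv : u ≤ v) (hT : ∀ i, T i ⊆ Icc u v)
    (hinner : ∀ ε > 0, ∀ᶠ i in l, Icc (u + ε) (v - ε) ⊆ T i) :
    Tendsto (fun i => Metric.diam (closure (T i))) l (𝓝 (v - u)) := by
  have hcl : ∀ i, closure (T i) ⊆ Icc u v := fun i => closure_minimal (hT i) isClosed_Icc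
  refine tendsto_order.2 ⟨fun a ha => ?_, fun a ha => Eventually.of_forall fun i => ?_⟩
  · rcases lt_or_ge a 0 with ha0 | ha0
    · exact Eventually.of_forall fun i => ha0.trans_le Metric.diam_nonneg
    filter_upwards [hinner ((v - u - a) / 3) (by linarith)] with i hi
    calc a < v - (v - u - a) / 3 - (u + (v - u - a) / 3) := by linarith
      _ = Metric.diam (Icc (u + (v - u - a) / 3) (v - (v - u - a) / 3)) :=
        (Real.diam_Icc (by linarith)).symm
      _ ≤ Metric.diam (closure (T i)) :=
        Metric.diam_mono (hi.trans subset_closure) ((Metric.isBounded_Icc u v).subset (hcl i))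
  · calc Metric.diam (closure (T i)) ≤ Metric.diam (Icc u v) :=
          Metric.diam_mono (hcl i) (Metric.isBounded_Icc u v)
      _ = v - u := Real.diam_Icc huv
      _ < a := ha

theorem gersho_stmt_10_general (μ : Measure ℝ)
    (r : ℝ) (hr : 1 < r) (hmom : Integrable (fun x => |x| ^ r) μ)
    (h : ℝ → ℝ)
    (hμ : μ = volume.withDensity (fun x => ENNReal.ofReal (h x)))
    (hwu : WeaklyUnimodal h)
    (q : ℕ → ℝ → ℝ) (hq : ∀ n : ℕ, 0 < n → IsGersho μ r n (q n))
    (u v : ℝ) (huv : u < v) (hI : Set.Icc u v ⊆ interior (msupp μ)) :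
    Tendsto
      (fun n : ℕ =>
        Metric.diam (closure (⋃ a ∈ Jcells q (Set.Icc u v) n, (q n) ⁻¹' {a})))
      atTop (nhds (Metric.diam (Set.Icc u v))) := by
  subst hμ
  obtain ⟨δ, hδ, hδh⟩ := exists_pos_le_density_on_Icc hwu huv.le hI
  have hgersho : ∀ᶠ n in atTop, IsGersho _ r n (q n) := (eventually_gt_atTop 0).mono hq
  rw [Real.diam_Icc huv.le]
  refine tendsto_diam_closure_of_Icc_subset huv.le (fun n => iUnion₂_subset fun a ha => ha.2)
    fun ε hε => ?_
  have hc : ENNReal.ofReal ((ε / 4) ^ r * (δ * (ε / 4))) ≠ 0 :=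
    (ENNReal.ofReal_pos.2 (by positivity)).ne'
  filter_upwards [hgersho, eventually_cellMoment_lt hmom hgersho hc] with n hg hsmall
  exact Icc_subset_biUnion_Jcells (by linarith) hg.2.2.1 hδ.le hε.le hδh hsmall

theorem gersho_stmt_10 (μ : Measure ℝ) [IsProbabilityMeasure μ]
    (r : ℝ) (hr : 1 < r) (hmom : Integrable (fun x => |x| ^ r) μ)
    (h : ℝ → ℝ) (hh0 : ∀ x, 0 ≤ h x)
    (hμ : μ = volume.withDensity (fun x => ENNReal.ofReal (h x)))
    (hwu : WeaklyUnimodal h)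
    (q : ℕ → ℝ → ℝ) (hq : ∀ n : ℕ, 0 < n → IsGersho μ r n (q n))
    (u v : ℝ) (huv : u < v) (hI : Set.Icc u v ⊆ interior (msupp μ))
    (m : ℕ) (hm : ∀ n ≥ m, (Jcells q (Set.Icc u v) n).Nonempty) :
    Tendsto
      (fun n : ℕ =>
        Metric.diam (closure (⋃ a ∈ Jcells q (Set.Icc u v) n, (q n) ⁻¹' {a})))
      atTop (nhds (Metric.diam (Set.Icc u v))) :=
  gersho_stmt_10_general μ r hr hmom h hμ hwu q hq u v huv hI
end

section
/- Under the same hypotheses (μ weakly unimodal, r > 1, (q_n) the Gersho quantizer sequence, I ⊆ interior of supp μ compact, J_{n,I} ≠ ∅ for n ≥ m), define ε₂(n) = max{ | ∫_{q_n⁻¹(a)} |x − a|^r dμ(x) − diam(q_n⁻¹(a))^{1+r} · h(a) · Q(r) | : a ∈ J_{n,I} }, where Q(r) = 2^{−r}(1 + r)^{−1}. Then (n₁^I(n))^{1+r} · ε₂(n) → 0 as n → ∞. -/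
open MeasureTheory Set Filter Topology
open scoped ENNReal NNReal

/-!
Every codecell of a Gersho quantizer carries the same moment `t_n = D_n / n`, and
`D_n ≤ ∫ |x|^r dμ`, so `t_n → 0`. An optimal codepoint lies between the endpoints of its cell
(otherwise the nearer endpoint would be a better centre), and the moment of Lebesgue measure on an
interval of length `L` about such a point is at least `Q(r) L^(1+r)`, with equality at the
midpoint. Hence a cell `C ⊆ I` on which `c ≤ h ≤ c'` satisfies
`c Q(r) diam(C)^(1+r) ≤ t_n ≤ c' Q(r) diam(C)^(1+r)`. With `c₁ ≤ h ≤ c₂` on `I` the cells in `I`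
are therefore uniformly small and of comparable lengths, so `n₁ diam(C) ≤ (c₂/c₁)^(1/(1+r)) |I|`;
by uniform continuity of `h` on `I` each cell's error is `o(Q(r) diam(C)^(1+r)) = o(n₁^(-(1+r)))`.
-/

lemma continuous_abs_sub_rpow {r : ℝ} (hr : 0 ≤ r) (b : ℝ) :
    Continuous fun x : ℝ => |x - b| ^ r :=
  (continuous_id.sub continuous_const).abs.rpow_const fun _ => Or.inr hr

lemma integral_abs_sub_rpow {r α β b : ℝ} (hr : 0 ≤ r) (hαb : α ≤ b) (hbβ : b ≤ β) :
    ∫ x in α..β, |x - b| ^ r = ((b - α) ^ (1 + r) + (β - b) ^ (1 + r)) / (1 + r) := by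
  have hint : ∀ c d, IntervalIntegrable (fun x : ℝ => |x - b| ^ r) volume c d :=
    fun c d => (continuous_abs_sub_rpow hr b).intervalIntegrable c d
  have hleft : ∫ x in α..b, |x - b| ^ r = ∫ x in α..b, (b - x) ^ r :=
    intervalIntegral.integral_congr fun x hx => by
      rw [uIcc_of_le hαb] at hx
      simp only [abs_of_nonpos (sub_nonpos.2 hx.2), neg_sub]
  have hright : ∫ x in b..β, |x - b| ^ r = ∫ x in b..β, (x - b) ^ r :=
    intervalIntegral.integral_congr fun x hx => by
      rw [uIcc_of_le hbβ] at hx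
      simp only [abs_of_nonneg (sub_nonneg.2 hx.1)]
  have hr1 : r + 1 ≠ 0 := by linarith
  rw [← intervalIntegral.integral_add_adjacent_intervals (hint α b) (hint b β), hleft, hright,
    intervalIntegral.integral_comp_sub_left (fun y => y ^ r),
    intervalIntegral.integral_comp_sub_right (fun y => y ^ r), sub_self,
    integral_rpow (Or.inl (by linarith)), integral_rpow (Or.inl (by linarith)),
    Real.zero_rpow hr1, add_comm 1 r]
  ring

lemma lintegral_Icc_abs_sub_rpow {r α β b : ℝ} (hr : 0 ≤ r) (hαb : α ≤ b) (hbβ : b ≤ β) :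
    ∫⁻ x in Icc α β, ENNReal.ofReal (|x - b| ^ r) =
      ENNReal.ofReal (((b - α) ^ (1 + r) + (β - b) ^ (1 + r)) / (1 + r)) := by
  rw [← integral_abs_sub_rpow hr hαb hbβ, intervalIntegral.integral_of_le (hαb.trans hbβ),
    ← integral_Icc_eq_integral_Ioc, ofReal_integral_eq_lintegral_ofReal
      (continuous_abs_sub_rpow hr b).integrableOn_Icc (ae_of_all _ fun x => by positivity)]

lemma Qconst_pos {r : ℝ} (hr : -1 < r) : 0 < Qconst r :=
  mul_pos (Real.rpow_pos_of_pos two_pos _) (inv_pos.2 (by linarith))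

lemma Qconst_mul_rpow {r L : ℝ} (hL : 0 ≤ L) :
    Qconst r * L ^ (1 + r) = 2 * (L / 2) ^ (1 + r) / (1 + r) := by
  rw [Qconst, Real.div_rpow hL zero_le_two, add_comm 1 r, Real.rpow_add_one two_ne_zero,
    Real.rpow_neg zero_le_two]
  field_simp

/-- The right side is the moment of `[b - s, b + t]` about `b`, the left side that of an interval of
the same length about its midpoint. -/
lemma Qconst_mul_add_rpow_le {r s t : ℝ} (hr : 0 ≤ r) (hs : 0 ≤ s) (ht : 0 ≤ t) :
    Qconst r * (s + t) ^ (1 + r) ≤ (s ^ (1 + r) + t ^ (1 + r)) / (1 + r) := by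
  have hconv := (convexOn_rpow (p := 1 + r) (by linarith)).2 (mem_Ici.2 hs) (mem_Ici.2 ht)
    (by norm_num : (0 : ℝ) ≤ 1 / 2) (by norm_num : (0 : ℝ) ≤ 1 / 2) (by norm_num)
  simp only [smul_eq_mul] at hconv
  rw [Qconst_mul_rpow (add_nonneg hs ht), show (s + t) / 2 = 1 / 2 * s + 1 / 2 * t by ring]
  gcongr
  linarith

section Density

variable {μ : Measure ℝ} {h : ℝ → ℝ}

lemma exists_pos_of_withDensity_pos_s14 (hμ : μ = volume.withDensity fun x => ENNReal.ofReal (h x))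
    {U : Set ℝ} (hU : MeasurableSet U) (hpos : 0 < μ U) : ∃ y ∈ U, 0 < h y := by
  contrapose! hpos
  rw [hμ, withDensity_apply _ hU, setLIntegral_congr_fun hU
    fun y hy => ENNReal.ofReal_eq_zero.2 (hpos y hy), lintegral_zero]

lemma msupp_subset_tsupport (hμ : μ = volume.withDensity fun x => ENNReal.ofReal (h x)) :
    msupp μ ⊆ tsupport h := fun _ hx =>
  mem_closure_iff_nhds.2 fun _ hU =>
    let ⟨y, hyU, hy⟩ := exists_pos_of_withDensity_pos_s14 hμ isOpen_interior.measurableSet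
      (hx _ (interior_mem_nhds.2 hU))
    ⟨y, interior_subset hyU, hy.ne'⟩

lemma exists_pos_of_isOpen_subset_msupp
    (hμ : μ = volume.withDensity fun x => ENNReal.ofReal (h x)) {U : Set ℝ} (hU : IsOpen U)
    (hne : U.Nonempty) (hsub : U ⊆ msupp μ) : ∃ y ∈ U, 0 < h y :=
  let ⟨_, hx⟩ := hne
  exists_pos_of_withDensity_pos_s14 hμ hU.measurableSet (hsub hx _ (hU.mem_nhds hx))

/-- A point of the interior of the support lies between two points where `h` is positive, hence
in a superlevel set `{h ≥ l}` with `l > 0`, which is an interval. -/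
lemma WeaklyUnimodal.pos_of_mem_interior_msupp (hwu : WeaklyUnimodal h)
    (hμ : μ = volume.withDensity fun x => ENNReal.ofReal (h x)) {x : ℝ}
    (hx : x ∈ interior (msupp μ)) : 0 < h x := by
  obtain ⟨ε, hε, hball⟩ := Metric.mem_nhds_iff.1 (mem_interior_iff_mem_nhds.1 hx)
  rw [Real.ball_eq_Ioo] at hball
  obtain ⟨w₁, hw₁, hw₁pos⟩ := exists_pos_of_isOpen_subset_msupp hμ isOpen_Ioo
    (nonempty_Ioo.2 (by linarith : x - ε < x)) ((Ioo_subset_Ioo_right (by linarith)).trans hball)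
  obtain ⟨w₂, hw₂, hw₂pos⟩ := exists_pos_of_isOpen_subset_msupp hμ isOpen_Ioo
    (nonempty_Ioo.2 (by linarith : x < x + ε)) ((Ioo_subset_Ioo_left (by linarith)).trans hball)
  obtain ⟨l₀, hl₀, hlevel⟩ := hwu.2
  set l := min (min (h w₁) (h w₂)) (l₀ / 2)
  have hl : 0 < l := lt_min (lt_min hw₁pos hw₂pos) (by linarith)
  have hinterval := (hlevel l hl ((min_le_right _ _).trans_lt (by linarith))).2
  have hw₁l : l ≤ h w₁ := (min_le_left _ _).trans (min_le_left _ _)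
  have hw₂l : l ≤ h w₂ := (min_le_left _ _).trans (min_le_right _ _)
  exact hl.trans_le (hinterval.out hw₁l hw₂l ⟨hw₁.2.le, hw₂.1.le⟩)

end Density

lemma abs_sub_rpow_add_abs_sub_rpow_le {r a b x : ℝ} (hr : 1 ≤ r) (hb : b ∈ uIcc a x) :
    |x - b| ^ r + |b - a| ^ r ≤ |x - a| ^ r := by
  have hsplit := dist_add_dist_of_mem_segment (segment_eq_uIcc a x ▸ hb)
  simp only [Real.dist_eq] at hsplit
  calc |x - b| ^ r + |b - a| ^ r = |a - b| ^ r + |b - x| ^ r := by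
        rw [abs_sub_comm x b, abs_sub_comm b a, add_comm]
    _ ≤ (|a - b| + |b - x|) ^ r := Real.add_rpow_le_rpow_add (abs_nonneg _) (abs_nonneg _) hr
    _ = |x - a| ^ r := by rw [hsplit, abs_sub_comm]

/-- Moving the centre from `a` to a point `b` between `a` and `S` lowers the moment by at least
`|b - a| ^ r * μ S`. -/
lemma measure_eq_zero_of_cellMoment_le {μ : Measure ℝ} {r a b : ℝ} (hr : 1 ≤ r) {S : Set ℝ}
    (hS : MeasurableSet S) (hab : a ≠ b) (hb : ∀ x ∈ S, b ∈ uIcc a x)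
    (hle : cellMoment μ r S a ≤ cellMoment μ r S b) (hfin : cellMoment μ r S a ≠ ⊤) :
    μ S = 0 := by
  have hsum : cellMoment μ r S b + ENNReal.ofReal (|b - a| ^ r) * μ S ≤ cellMoment μ r S a := by
    rw [← setLIntegral_const, cellMoment, cellMoment,
      ← lintegral_add_left (continuous_abs_sub_rpow (by linarith) b).measurable.ennreal_ofReal]
    refine setLIntegral_mono' hS fun x hx => ?_
    rw [← ENNReal.ofReal_add (by positivity) (by positivity)]
    exact ENNReal.ofReal_le_ofReal (abs_sub_rpow_add_abs_sub_rpow_le hr (hb x hx))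
  have hfin' : cellMoment μ r S b ≠ ⊤ :=
    ne_top_of_le_ne_top hfin ((le_add_right le_rfl).trans hsum)
  have hzero : ENNReal.ofReal (|b - a| ^ r) * μ S ≤ 0 :=
    ENNReal.le_of_add_le_add_left hfin' (by rw [add_zero]; exact hsum.trans hle)
  have hpos : ENNReal.ofReal (|b - a| ^ r) ≠ 0 := by
    rw [ENNReal.ofReal_ne_zero_iff]
    exact Real.rpow_pos_of_pos (abs_pos.2 (sub_ne_zero.2 hab.symm)) r
  exact (mul_eq_zero.1 (nonpos_iff_eq_zero.1 hzero)).resolve_left hpos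

lemma mem_Icc_csInf_csSup_of_cellMoment_le {μ : Measure ℝ} {r a : ℝ} (hr : 1 ≤ r) {C : Set ℝ}
    (hC : MeasurableSet C) (hbdd : Bornology.IsBounded C)
    (hopt : ∀ b, cellMoment μ r C a ≤ cellMoment μ r C b)
    (hzero : cellMoment μ r C a ≠ 0) (hfin : cellMoment μ r C a ≠ ⊤) :
    a ∈ Icc (sInf C) (sSup C) := by
  have hsep : ∀ b, a ≠ b → (∀ x ∈ C, b ∈ uIcc a x) → False := fun b hab hb =>
    hzero (setLIntegral_measure_zero _ _
      (measure_eq_zero_of_cellMoment_le hr hC hab hb (hopt b) hfin))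
  by_contra ha
  rw [mem_Icc, not_and_or, not_le, not_le] at ha
  rcases ha with ha | ha
  · exact hsep _ ha.ne fun x hx => mem_uIcc_of_le ha.le (csInf_le hbdd.bddBelow hx)
  · exact hsep _ ha.ne' fun x hx => mem_uIcc_of_ge (le_csSup hbdd.bddAbove hx) ha.le

lemma Set.OrdConnected.ae_eq_Icc {C : Set ℝ} (hC : C.OrdConnected) (hbdd : Bornology.IsBounded C)
    (hne : C.Nonempty) : C =ᵐ[volume] Icc (sInf C) (sSup C) := by
  refine ae_eq_of_subset_of_measure_ge (subset_Icc_csInf_csSup hbdd.bddBelow hbdd.bddAbove) ?_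
    hC.measurableSet.nullMeasurableSet measure_Icc_lt_top.ne
  rw [← measure_congr Ioo_ae_eq_Icc]
  exact measure_mono <| IsConnected.Ioo_csInf_csSup_subset
    ⟨hne, isPreconnected_iff_ordConnected.2 hC⟩ hbdd.bddBelow hbdd.bddAbove

lemma Set.OrdConnected.volume_eq_ofReal_diam {C : Set ℝ} (hC : C.OrdConnected)
    (hbdd : Bornology.IsBounded C) (hne : C.Nonempty) :
    volume C = ENNReal.ofReal (Metric.diam C) := by
  rw [measure_congr (hC.ae_eq_Icc hbdd hne), Real.volume_Icc, Real.diam_eq hbdd]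

lemma abs_sub_le_diam_of_mem_Icc {C : Set ℝ} (hbdd : Bornology.IsBounded C) {x a : ℝ}
    (hx : x ∈ C) (ha : a ∈ Icc (sInf C) (sSup C)) : |x - a| ≤ Metric.diam C := by
  have hxI := subset_Icc_csInf_csSup hbdd.bddBelow hbdd.bddAbove hx
  rw [Real.diam_eq hbdd, abs_le]
  constructor <;> linarith [ha.1, ha.2, hxI.1, hxI.2]

lemma smul_restrict_le_withDensity_restrict {α : Type*} [MeasurableSpace α] {ν : Measure α}
    {f : α → ℝ≥0∞} {s : Set α} (hs : MeasurableSet s) {c : ℝ≥0∞} (hc : ∀ x ∈ s, c ≤ f x) :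
    c • ν.restrict s ≤ (ν.withDensity f).restrict s := by
  rw [restrict_withDensity hs, ← withDensity_const]
  exact withDensity_mono ((ae_restrict_iff' hs).2 (ae_of_all _ hc))

lemma withDensity_restrict_le_smul_restrict {α : Type*} [MeasurableSpace α] {ν : Measure α}
    {f : α → ℝ≥0∞} {s : Set α} (hs : MeasurableSet s) {c : ℝ≥0∞} (hc : ∀ x ∈ s, f x ≤ c) :
    (ν.withDensity f).restrict s ≤ c • ν.restrict s := by
  rw [restrict_withDensity hs, ← withDensity_const]
  exact withDensity_mono ((ae_restrict_iff' hs).2 (ae_of_all _ hc))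

section CellBounds

variable {μ : Measure ℝ} {h : ℝ → ℝ} {r a c : ℝ} {C : Set ℝ}

lemma mul_Qconst_le_toReal_cellMoment
    (hμ : μ = volume.withDensity fun x => ENNReal.ofReal (h x)) (hr : 0 ≤ r)
    (hC : C.OrdConnected) (hbdd : Bornology.IsBounded C) (hne : C.Nonempty)
    (ha : a ∈ Icc (sInf C) (sSup C)) (hfin : cellMoment μ r C a ≠ ⊤) (hc : ∀ x ∈ C, c ≤ h x) :
    c * (Qconst r * Metric.diam C ^ (1 + r)) ≤ (cellMoment μ r C a).toReal := by
  rcases le_or_gt c 0 with hc0 | hc0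
  · exact (mul_nonpos_of_nonpos_of_nonneg hc0
      (mul_nonneg (Qconst_pos (by linarith)).le (by positivity))).trans ENNReal.toReal_nonneg
  have hdens : ENNReal.ofReal c • volume.restrict C ≤ μ.restrict C := by
    rw [hμ]
    exact smul_restrict_le_withDensity_restrict hC.measurableSet
      fun x hx => ENNReal.ofReal_le_ofReal (hc x hx)
  have hmin : Qconst r * Metric.diam C ^ (1 + r) ≤
      ((a - sInf C) ^ (1 + r) + (sSup C - a) ^ (1 + r)) / (1 + r) := by
    have := Qconst_mul_add_rpow_le hr (sub_nonneg.2 ha.1) (sub_nonneg.2 ha.2)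
    rwa [sub_add_sub_cancel', ← Real.diam_eq hbdd] at this
  rw [← ENNReal.ofReal_le_iff_le_toReal hfin]
  calc ENNReal.ofReal (c * (Qconst r * Metric.diam C ^ (1 + r)))
      ≤ ENNReal.ofReal c * ∫⁻ x in Icc (sInf C) (sSup C), ENNReal.ofReal (|x - a| ^ r) := by
        rw [lintegral_Icc_abs_sub_rpow hr ha.1 ha.2, ← ENNReal.ofReal_mul hc0.le]
        gcongr
    _ = ∫⁻ x, ENNReal.ofReal (|x - a| ^ r) ∂(ENNReal.ofReal c • volume.restrict C) := by
        rw [lintegral_smul_measure, setLIntegral_congr (hC.ae_eq_Icc hbdd hne), smul_eq_mul]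
    _ ≤ cellMoment μ r C a := lintegral_mono' hdens le_rfl

lemma toReal_cellMoment_le_mul_Qconst
    (hμ : μ = volume.withDensity fun x => ENNReal.ofReal (h x)) (hr : 0 ≤ r)
    (hC : C.OrdConnected) (hbdd : Bornology.IsBounded C) (hne : C.Nonempty)
    (hopt : ∀ b, cellMoment μ r C a ≤ cellMoment μ r C b) (hc0 : 0 ≤ c)
    (hc : ∀ x ∈ C, h x ≤ c) :
    (cellMoment μ r C a).toReal ≤ c * (Qconst r * Metric.diam C ^ (1 + r)) := by
  have hdens : μ.restrict C ≤ ENNReal.ofReal c • volume.restrict C := by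
    rw [hμ]
    exact withDensity_restrict_le_smul_restrict hC.measurableSet
      fun x hx => ENNReal.ofReal_le_ofReal (hc x hx)
  set m := (sInf C + sSup C) / 2 with hm_def
  have hm : m ∈ Icc (sInf C) (sSup C) := by
    have := Real.sInf_le_sSup C hbdd.bddBelow hbdd.bddAbove
    constructor <;> linarith
  have hmid : ((m - sInf C) ^ (1 + r) + (sSup C - m) ^ (1 + r)) / (1 + r) =
      Qconst r * Metric.diam C ^ (1 + r) := by
    rw [Qconst_mul_rpow Metric.diam_nonneg, Real.diam_eq hbdd,
      show m - sInf C = (sSup C - sInf C) / 2 by linarith,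
      show sSup C - m = (sSup C - sInf C) / 2 by linarith]
    ring
  refine ENNReal.toReal_le_of_le_ofReal
    (mul_nonneg hc0 (mul_nonneg (Qconst_pos (by linarith)).le (by positivity))) ?_
  calc cellMoment μ r C a ≤ cellMoment μ r C m := hopt m
    _ ≤ ∫⁻ x, ENNReal.ofReal (|x - m| ^ r) ∂(ENNReal.ofReal c • volume.restrict C) :=
        lintegral_mono' hdens le_rfl
    _ = ENNReal.ofReal (c * (Qconst r * Metric.diam C ^ (1 + r))) := by
        rw [lintegral_smul_measure, setLIntegral_congr (hC.ae_eq_Icc hbdd hne),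
          lintegral_Icc_abs_sub_rpow hr hm.1 hm.2, hmid, ENNReal.ofReal_mul hc0, smul_eq_mul]

lemma abs_toReal_cellMoment_sub_le {ε : ℝ}
    (hμ : μ = volume.withDensity fun x => ENNReal.ofReal (h x)) (hr : 0 ≤ r)
    (hC : C.OrdConnected) (hbdd : Bornology.IsBounded C) (hne : C.Nonempty)
    (ha : a ∈ Icc (sInf C) (sSup C)) (hopt : ∀ b, cellMoment μ r C a ≤ cellMoment μ r C b)
    (hfin : cellMoment μ r C a ≠ ⊤) (hha : 0 ≤ h a) (hosc : ∀ x ∈ C, |h x - h a| ≤ ε) :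
    |(cellMoment μ r C a).toReal - Metric.diam C ^ (1 + r) * h a * Qconst r| ≤
      ε * (Qconst r * Metric.diam C ^ (1 + r)) := by
  obtain ⟨x, hx⟩ := hne
  have hε : 0 ≤ ε := (abs_nonneg _).trans (hosc x hx)
  have hlow := mul_Qconst_le_toReal_cellMoment (c := h a - ε) hμ hr hC hbdd ⟨x, hx⟩ ha hfin
    fun y hy => by linarith [(abs_le.1 (hosc y hy)).1]
  have hup := toReal_cellMoment_le_mul_Qconst (c := h a + ε) hμ hr hC hbdd ⟨x, hx⟩ hopt
    (by linarith) fun y hy => by linarith [(abs_le.1 (hosc y hy)).2]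
  rw [abs_le]
  constructor <;> linarith

end CellBounds

section Distortion

variable {μ : Measure ℝ} {q : ℝ → ℝ} {r : ℝ}

lemma IsQuantizer.lintegral_eq_tsum (hq : IsQuantizer q) (f : ℝ → ℝ≥0∞) :
    ∫⁻ x, f x ∂μ = ∑' a : range q, ∫⁻ x in q ⁻¹' {(a : ℝ)}, f x ∂μ := by
  have := hq.2.to_subtype
  rw [← lintegral_iUnion (fun a => hq.1 (measurableSet_singleton _))
    (fun a b hab => (disjoint_singleton.2 (Subtype.coe_injective.ne hab)).preimage q),
    iUnion_coe_set, biUnion_preimage_singleton, preimage_range, Measure.restrict_univ]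

lemma IsQuantizer.distortionE_eq_tsum (hq : IsQuantizer q) :
    distortionE μ q r = ∑' a : range q, cellMoment μ r (q ⁻¹' {(a : ℝ)}) a := by
  rw [distortionE, hq.lintegral_eq_tsum]
  refine tsum_congr fun a => setLIntegral_congr_fun (hq.1 (measurableSet_singleton _)) ?_
  intro x hx
  simp only [show q x = a from hx]

lemma IsQuantizer.distortionE_le (hq : IsQuantizer q)
    (hopt : ∀ a ∈ range q, ∀ b, cellMoment μ r (q ⁻¹' {a}) a ≤ cellMoment μ r (q ⁻¹' {a}) b)
    (b : ℝ) : distortionE μ q r ≤ ∫⁻ x, ENNReal.ofReal (|x - b| ^ r) ∂μ := by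
  rw [hq.distortionE_eq_tsum, hq.lintegral_eq_tsum]
  exact ENNReal.tsum_le_tsum fun a => hopt a a.2 b

lemma IsQuantizer.distortionE_ne_zero [NullSingletonClass μ] [NeZero μ] (hq : IsQuantizer q) :
    distortionE μ q r ≠ 0 := by
  intro hzero
  have hmeas : Measurable fun x => ENNReal.ofReal (|x - q x| ^ r) :=
    ((measurable_id.sub hq.1).abs.pow_const r).ennreal_ofReal
  rw [distortionE, lintegral_eq_zero_iff hmeas] at hzero
  have hfixed : ∀ᵐ x ∂μ, x ∈ range q := hzero.mono fun x hx => by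
    have hpow : |x - q x| ^ r = 0 :=
      le_antisymm (ENNReal.ofReal_eq_zero.1 hx) (by positivity)
    rw [Real.rpow_eq_zero_iff_of_nonneg (abs_nonneg _), abs_eq_zero, sub_eq_zero] at hpow
    exact ⟨x, hpow.1.symm⟩
  have huniv : μ univ = 0 := nonpos_iff_eq_zero.1 <|
    (measure_univ_le_add_compl (range q)).trans_eq <| by
      rw [hq.2.measure_zero μ, zero_add]; exact mem_ae_iff.1 hfixed
  exact NeZero.ne μ (Measure.measure_univ_eq_zero.1 huniv)

end Distortion

lemma sum_diam_le_of_pairwiseDisjoint {ι : Type*} {s : Finset ι} {C : ι → Set ℝ} {u v : ℝ}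
    (huv : u ≤ v) (hdisj : (s : Set ι).PairwiseDisjoint C) (hC : ∀ i ∈ s, (C i).OrdConnected)
    (hne : ∀ i ∈ s, (C i).Nonempty) (hsub : ∀ i ∈ s, C i ⊆ Icc u v) :
    ∑ i ∈ s, Metric.diam (C i) ≤ v - u := by
  have hvol : ENNReal.ofReal (∑ i ∈ s, Metric.diam (C i)) ≤ ENNReal.ofReal (v - u) := calc
    ENNReal.ofReal (∑ i ∈ s, Metric.diam (C i)) = ∑ i ∈ s, volume (C i) := by
        rw [ENNReal.ofReal_sum_of_nonneg fun i _ => Metric.diam_nonneg]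
        exact Finset.sum_congr rfl fun i hi => ((hC i hi).volume_eq_ofReal_diam
          ((Metric.isBounded_Icc u v).subset (hsub i hi)) (hne i hi)).symm
    _ = volume (⋃ i ∈ s, C i) :=
        (measure_biUnion_finset hdisj fun i hi => (hC i hi).measurableSet).symm
    _ ≤ volume (Icc u v) := measure_mono (iUnion₂_subset hsub)
    _ = ENNReal.ofReal (v - u) := Real.volume_Icc
  rwa [ENNReal.ofReal_le_ofReal_iff (by linarith)] at hvol

/-- Each `L a` is at most `κ ^ (1/p)` times every `L b`, hence at most `κ ^ (1/p)` times their
average. -/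
lemma card_mul_rpow_le {ι : Type*} {s : Finset ι} {L : ι → ℝ} {κ ℓ p : ℝ} (hp : 0 < p)
    (hκ : 0 ≤ κ) (hL : ∀ a ∈ s, 0 ≤ L a) (hcmp : ∀ a ∈ s, ∀ b ∈ s, L a ^ p ≤ κ * L b ^ p)
    (hsum : ∑ b ∈ s, L b ≤ ℓ) {a : ι} (ha : a ∈ s) : ((s.card : ℝ) * L a) ^ p ≤ κ * ℓ ^ p := by
  set ρ := κ ^ p⁻¹
  have hρ : 0 ≤ ρ := Real.rpow_nonneg hκ _
  have hρp : ρ ^ p = κ := Real.rpow_inv_rpow hκ hp.ne'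
  have hℓ : 0 ≤ ℓ := (Finset.sum_nonneg hL).trans hsum
  have hab : ∀ b ∈ s, L a ≤ ρ * L b := fun b hb => by
    rw [← Real.rpow_le_rpow_iff (hL a ha) (mul_nonneg hρ (hL b hb)) hp,
      Real.mul_rpow hρ (hL b hb), hρp]
    exact hcmp a ha b hb
  have hcard : (s.card : ℝ) * L a ≤ ρ * ℓ := calc
    (s.card : ℝ) * L a = ∑ _b ∈ s, L a := by rw [Finset.sum_const, nsmul_eq_mul]
    _ ≤ ∑ b ∈ s, ρ * L b := Finset.sum_le_sum hab
    _ ≤ ρ * ℓ := by rw [← Finset.mul_sum]; exact mul_le_mul_of_nonneg_left hsum hρ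
  calc ((s.card : ℝ) * L a) ^ p ≤ (ρ * ℓ) ^ p :=
        Real.rpow_le_rpow (mul_nonneg (Nat.cast_nonneg _) (hL a ha)) hcard hp.le
    _ = κ * ℓ ^ p := by rw [Real.mul_rpow hρ hℓ, hρp]

lemma mul_sSup_image_le {ι : Type*} {s : Set ι} (hs : s.Finite) {f : ι → ℝ} {c B : ℝ}
    (hB : 0 ≤ B) (hbound : ∀ a ∈ s, c * f a ≤ B) : c * sSup (f '' s) ≤ B := by
  rcases s.eq_empty_or_nonempty with rfl | hne
  · simpa using hB
  obtain ⟨a, ha, hsup⟩ := (hne.image f).csSup_mem (hs.image f)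
  rw [← hsup]
  exact hbound a ha

lemma tendsto_zero_of_eventually_le_mul {f : ℕ → ℝ} {K : ℝ} (hf : ∀ n, 0 ≤ f n) (hK : 0 < K)
    (hle : ∀ ε > 0, ∀ᶠ n in atTop, f n ≤ ε * K) : Tendsto f atTop (𝓝 0) :=
  tendsto_order.2 ⟨fun b hb => Eventually.of_forall fun n => hb.trans_le (hf n),
    fun b hb => (hle (b / 2 / K) (by positivity)).mono fun n hn =>
      hn.trans_lt (by rw [div_mul_cancel₀ _ hK.ne']; linarith)⟩

section Gersho

variable {μ : Measure ℝ} {h : ℝ → ℝ} {r : ℝ} {n : ℕ} {Q : ℝ → ℝ} {q : ℕ → ℝ → ℝ} {u v c : ℝ}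

lemma IsGersho.cellMoment_ne_top (hQ : IsGersho μ r n Q) (hn : n ≠ 0)
    (hD : distortionE μ Q r ≠ ⊤) {a : ℝ} (ha : a ∈ range Q) :
    cellMoment μ r (Q ⁻¹' {a}) a ≠ ⊤ := by
  rw [hQ.2.2.2.2 a ha]
  exact ENNReal.div_ne_top hD (Nat.cast_ne_zero.2 hn)

lemma IsGersho.mem_Icc_csInf_csSup [NullSingletonClass μ] [NeZero μ] (hr : 1 ≤ r)
    (hQ : IsGersho μ r n Q) (hn : n ≠ 0) (hD : distortionE μ Q r ≠ ⊤) {a : ℝ} (ha : a ∈ range Q)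
    (hbdd : Bornology.IsBounded (Q ⁻¹' {a})) :
    a ∈ Icc (sInf (Q ⁻¹' {a})) (sSup (Q ⁻¹' {a})) := by
  refine mem_Icc_csInf_csSup_of_cellMoment_le hr (hQ.1.1 (measurableSet_singleton a)) hbdd
    (hQ.2.2.2.1 a ha) ?_ (hQ.cellMoment_ne_top hn hD ha)
  rw [hQ.2.2.2.2 a ha]
  exact ENNReal.div_ne_zero.2 ⟨hQ.1.distortionE_ne_zero, ENNReal.natCast_ne_top n⟩

lemma IsGersho.distortionE_le_lintegral (hQ : IsGersho μ r n Q) :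
    distortionE μ Q r ≤ ∫⁻ x, ENNReal.ofReal (|x| ^ r) ∂μ := by
  simpa using hQ.1.distortionE_le hQ.2.2.2.1 0

lemma IsGersho.distortionE_ne_top (hQ : IsGersho μ r n Q)
    (hmom : ∫⁻ x, ENNReal.ofReal (|x| ^ r) ∂μ ≠ ⊤) : distortionE μ Q r ≠ ⊤ :=
  ne_top_of_le_ne_top hmom hQ.distortionE_le_lintegral

lemma IsGersho.toReal_distortionE_div_le (hQ : IsGersho μ r n Q)
    (hmom : ∫⁻ x, ENNReal.ofReal (|x| ^ r) ∂μ ≠ ⊤) :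
    (distortionE μ Q r / n).toReal ≤ (∫⁻ x, ENNReal.ofReal (|x| ^ r) ∂μ).toReal / n := by
  rw [ENNReal.toReal_div, ENNReal.toReal_natCast]
  exact div_le_div_of_nonneg_right (ENNReal.toReal_mono hmom hQ.distortionE_le_lintegral)
    n.cast_nonneg


lemma IsGersho.mul_Qconst_le_of_mem_Jcells [NullSingletonClass μ] [NeZero μ]
    (hμ : μ = volume.withDensity fun x => ENNReal.ofReal (h x)) (hr : 1 ≤ r)
    (hq : IsGersho μ r n (q n)) (hn : n ≠ 0) (hD : distortionE μ (q n) r ≠ ⊤)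
    (hc : ∀ x ∈ Icc u v, c ≤ h x) {b : ℝ} (hb : b ∈ Jcells q (Icc u v) n) :
    c * (Qconst r * Metric.diam (q n ⁻¹' {b}) ^ (1 + r)) ≤
      (distortionE μ (q n) r / n).toReal := by
  have hbdd := (Metric.isBounded_Icc u v).subset hb.2
  rw [← hq.2.2.2.2 b hb.1]
  exact mul_Qconst_le_toReal_cellMoment hμ (by linarith) (hq.2.2.1 b hb.1) hbdd
    (preimage_singleton_nonempty.2 hb.1) (hq.mem_Icc_csInf_csSup hr hn hD hb.1 hbdd)
    (hq.cellMoment_ne_top hn hD hb.1) fun x hx => hc x (hb.2 hx)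

lemma IsGersho.le_mul_Qconst_of_mem_Jcells
    (hμ : μ = volume.withDensity fun x => ENNReal.ofReal (h x)) (hr : 0 ≤ r)
    (hq : IsGersho μ r n (q n)) (hc0 : 0 ≤ c) (hc : ∀ x ∈ Icc u v, h x ≤ c) {b : ℝ}
    (hb : b ∈ Jcells q (Icc u v) n) :
    (distortionE μ (q n) r / n).toReal ≤
      c * (Qconst r * Metric.diam (q n ⁻¹' {b}) ^ (1 + r)) := by
  rw [← hq.2.2.2.2 b hb.1]
  exact toReal_cellMoment_le_mul_Qconst hμ hr (hq.2.2.1 b hb.1)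
    ((Metric.isBounded_Icc u v).subset hb.2) (preimage_singleton_nonempty.2 hb.1)
    (hq.2.2.2.1 b hb.1) hc0 fun x hx => hc x (hb.2 hx)

lemma IsGersho.card_mul_diam_rpow_le [NullSingletonClass μ] [NeZero μ]
    (hμ : μ = volume.withDensity fun x => ENNReal.ofReal (h x)) (hr : 1 ≤ r)
    (hq : IsGersho μ r n (q n)) (hn : n ≠ 0) (hD : distortionE μ (q n) r ≠ ⊤) (huv : u ≤ v)
    {c₁ c₂ : ℝ} (hc₁ : 0 < c₁) (hhc₁ : ∀ x ∈ Icc u v, c₁ ≤ h x) (hhc₂ : ∀ x ∈ Icc u v, h x ≤ c₂)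
    {a : ℝ} (ha : a ∈ Jcells q (Icc u v) n) :
    ((Jcells q (Icc u v) n).ncard * Metric.diam (q n ⁻¹' {a})) ^ (1 + r) ≤
      c₂ / c₁ * (v - u) ^ (1 + r) := by
  have hJfin : (Jcells q (Icc u v) n).Finite :=
    (finite_of_encard_eq_coe hq.2.1).subset fun b hb => hb.1
  have hQ := Qconst_pos (r := r) (by linarith)
  obtain ⟨x, hx⟩ := ha.1
  have hxI : x ∈ Icc u v := ha.2 (show q n x = a from hx)
  have hc₂ : 0 ≤ c₂ := hc₁.le.trans ((hhc₁ x hxI).trans (hhc₂ x hxI))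
  have hcmp : ∀ b ∈ hJfin.toFinset, ∀ b' ∈ hJfin.toFinset,
      Metric.diam (q n ⁻¹' {b}) ^ (1 + r) ≤ c₂ / c₁ * Metric.diam (q n ⁻¹' {b'}) ^ (1 + r) := by
    intro b hb b' hb'
    have hle := (hq.mul_Qconst_le_of_mem_Jcells hμ hr hn hD hhc₁ (hJfin.mem_toFinset.1 hb)).trans
      (hq.le_mul_Qconst_of_mem_Jcells hμ (by linarith) hc₂ hhc₂ (hJfin.mem_toFinset.1 hb'))
    rw [mul_left_comm c₁, mul_left_comm c₂] at hle
    rw [div_mul_eq_mul_div, le_div_iff₀ hc₁, mul_comm]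
    exact le_of_mul_le_mul_left hle hQ
  have hsum : ∑ b ∈ hJfin.toFinset, Metric.diam (q n ⁻¹' {b}) ≤ v - u :=
    sum_diam_le_of_pairwiseDisjoint huv ((pairwiseDisjoint_fiber (q n) _).subset (subset_univ _))
      (fun b hb => hq.2.2.1 b (hJfin.mem_toFinset.1 hb).1)
      (fun b hb => preimage_singleton_nonempty.2 (hJfin.mem_toFinset.1 hb).1)
      fun b hb => (hJfin.mem_toFinset.1 hb).2
  rw [ncard_eq_toFinset_card _ hJfin]
  exact card_mul_rpow_le (by linarith) (div_nonneg hc₂ hc₁.le) (fun _ _ => Metric.diam_nonneg)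
    hcmp hsum (hJfin.mem_toFinset.2 ha)

lemma IsGersho.card_rpow_mul_abs_sub_le [NullSingletonClass μ] [NeZero μ]
    (hμ : μ = volume.withDensity fun x => ENNReal.ofReal (h x)) (hr : 1 ≤ r)
    (hq : IsGersho μ r n (q n)) (hn : n ≠ 0) (hD : distortionE μ (q n) r ≠ ⊤) (huv : u ≤ v)
    {c₁ c₂ δ ε : ℝ} (hc₁ : 0 < c₁) (hhc₁ : ∀ x ∈ Icc u v, c₁ ≤ h x) (hhc₂ : ∀ x ∈ Icc u v, h x ≤ c₂)
    (hδ : 0 < δ) (hosc : ∀ x ∈ Icc u v, ∀ y ∈ Icc u v, dist x y ≤ δ → dist (h x) (h y) ≤ ε)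
    (hsmall : (distortionE μ (q n) r / n).toReal ≤ c₁ * (Qconst r * δ ^ (1 + r)))
    {a : ℝ} (ha : a ∈ Jcells q (Icc u v) n) :
    ((Jcells q (Icc u v) n).ncard : ℝ) ^ (1 + r) *
        |(cellMoment μ r (q n ⁻¹' {a}) a).toReal -
          Metric.diam (q n ⁻¹' {a}) ^ (1 + r) * h a * Qconst r| ≤
      ε * (Qconst r * (c₂ / c₁ * (v - u) ^ (1 + r))) := by
  set C := q n ⁻¹' {a}
  have hp : 0 < 1 + r := by linarith
  have hQ := Qconst_pos (r := r) (by linarith)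
  have hbdd : Bornology.IsBounded C := (Metric.isBounded_Icc u v).subset ha.2
  have hne : C.Nonempty := preimage_singleton_nonempty.2 ha.1
  have hmem := hq.mem_Icc_csInf_csSup hr hn hD ha.1 hbdd
  have haI : a ∈ Icc u v := Icc_subset_Icc (le_csInf hne fun x hx => (ha.2 hx).1)
    (csSup_le hne fun x hx => (ha.2 hx).2) hmem
  have hdiam : Metric.diam C ≤ δ := by
    have hle := (hq.mul_Qconst_le_of_mem_Jcells hμ hr hn hD hhc₁ ha).trans hsmall
    exact (Real.rpow_le_rpow_iff Metric.diam_nonneg hδ.le hp).1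
      (le_of_mul_le_mul_left (le_of_mul_le_mul_left hle hc₁) hQ)
  have hosc_a : ∀ x ∈ C, |h x - h a| ≤ ε := fun x hx => by
    simpa only [Real.dist_eq] using hosc x (ha.2 hx) a haI
      (by rw [Real.dist_eq]; exact (abs_sub_le_diam_of_mem_Icc hbdd hx hmem).trans hdiam)
  have habs := abs_toReal_cellMoment_sub_le hμ (by linarith) (hq.2.2.1 a ha.1) hbdd hne hmem
    (hq.2.2.2.1 a ha.1) (hq.cellMoment_ne_top hn hD ha.1) (hc₁.le.trans (hhc₁ a haI)) hosc_a
  have hε : 0 ≤ ε := dist_nonneg.trans (hosc a haI a haI (by simpa using hδ.le))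
  calc ((Jcells q (Icc u v) n).ncard : ℝ) ^ (1 + r) *
        |(cellMoment μ r C a).toReal - Metric.diam C ^ (1 + r) * h a * Qconst r|
      ≤ ((Jcells q (Icc u v) n).ncard : ℝ) ^ (1 + r) * (ε * (Qconst r * Metric.diam C ^ (1 + r))) :=
        by gcongr
    _ = ε * (Qconst r * (((Jcells q (Icc u v) n).ncard : ℝ) * Metric.diam C) ^ (1 + r)) := by
        rw [Real.mul_rpow (Nat.cast_nonneg _) Metric.diam_nonneg]
        ring
    _ ≤ ε * (Qconst r * (c₂ / c₁ * (v - u) ^ (1 + r))) := by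
        gcongr
        exact hq.card_mul_diam_rpow_le hμ hr hn hD huv hc₁ hhc₁ hhc₂ ha

end Gersho

theorem gersho_stmt_14_general (μ : Measure ℝ) [IsProbabilityMeasure μ]
    (r : ℝ) (hr : 1 < r) (hmom : Integrable (fun x => |x| ^ r) μ)
    (h : ℝ → ℝ)
    (hμ : μ = volume.withDensity (fun x => ENNReal.ofReal (h x)))
    (hwu : WeaklyUnimodal h)
    (q : ℕ → ℝ → ℝ) (hq : ∀ n : ℕ, 0 < n → IsGersho μ r n (q n))
    (u v : ℝ) (huv : u < v) (hI : Set.Icc u v ⊆ interior (msupp μ)) :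
    Tendsto
      (fun n : ℕ => ((Jcells q (Set.Icc u v) n).ncard : ℝ) ^ (1 + r) *
        sSup ((fun a : ℝ =>
          |(cellMoment μ r ((q n) ⁻¹' {a}) a).toReal -
            Metric.diam ((q n) ⁻¹' {a}) ^ (1 + r) * h a * Qconst r|) ''
          Jcells q (Set.Icc u v) n))
      atTop (nhds 0) := by
  have : NullSingletonClass μ :=
    ⟨fun x => hμ ▸ withDensity_absolutelyContinuous _ _ (Real.volume_singleton (a := x))⟩
  have hcont : ContinuousOn h (Icc u v) :=
    hwu.1.mono fun x hx => msupp_subset_tsupport hμ (interior_subset (hI hx))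
  obtain ⟨x₁, hx₁, hmin⟩ := isCompact_Icc.exists_isMinOn (nonempty_Icc.2 huv.le) hcont
  obtain ⟨x₂, hx₂, hmax⟩ := isCompact_Icc.exists_isMaxOn (nonempty_Icc.2 huv.le) hcont
  have hc₁ : 0 < h x₁ := hwu.pos_of_mem_interior_msupp hμ (hI hx₁)
  have hQ : 0 < Qconst r := Qconst_pos (by linarith)
  set K := Qconst r * (h x₂ / h x₁ * (v - u) ^ (1 + r))
  have hK : 0 < K := mul_pos hQ (mul_pos (div_pos (hc₁.trans_le (hmin hx₂)) hc₁)
    (Real.rpow_pos_of_pos (sub_pos.2 huv) _))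
  have hmomfin : ∫⁻ x, ENNReal.ofReal (|x| ^ r) ∂μ ≠ ⊤ := hmom.lintegral_lt_top.ne
  refine tendsto_zero_of_eventually_le_mul (fun n => mul_nonneg (by positivity)
    (Real.sSup_nonneg (by rintro _ ⟨a, -, rfl⟩; positivity))) hK fun ε hε => ?_
  obtain ⟨δ, hδ, hosc⟩ := Metric.uniformContinuousOn_iff_le.1
    (isCompact_Icc.uniformContinuousOn_of_continuous hcont) ε hε
  have hlarge := (tendsto_const_div_atTop_nhds_zero_nat (∫⁻ x, ENNReal.ofReal (|x| ^ r) ∂μ).toReal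
    ).eventually (gt_mem_nhds (mul_pos hc₁ (mul_pos hQ (Real.rpow_pos_of_pos hδ (1 + r)))))
  filter_upwards [hlarge, eventually_ne_atTop 0] with n hn hn0
  have hqn := hq n (Nat.pos_of_ne_zero hn0)
  exact mul_sSup_image_le ((finite_of_encard_eq_coe hqn.2.1).subset fun a ha => ha.1)
    (by positivity) fun a ha => hqn.card_rpow_mul_abs_sub_le hμ hr.le hn0
      (hqn.distortionE_ne_top hmomfin) huv.le hc₁ (fun x hx => hmin hx) (fun x hx => hmax hx) hδ
      hosc ((hqn.toReal_distortionE_div_le hmomfin).trans hn.le) ha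

theorem gersho_stmt_14 (μ : Measure ℝ) [IsProbabilityMeasure μ]
    (r : ℝ) (hr : 1 < r) (hmom : Integrable (fun x => |x| ^ r) μ)
    (h : ℝ → ℝ) (hh0 : ∀ x, 0 ≤ h x)
    (hμ : μ = volume.withDensity (fun x => ENNReal.ofReal (h x)))
    (hwu : WeaklyUnimodal h)
    (q : ℕ → ℝ → ℝ) (hq : ∀ n : ℕ, 0 < n → IsGersho μ r n (q n))
    (u v : ℝ) (huv : u < v) (hI : Set.Icc u v ⊆ interior (msupp μ))
    (m : ℕ) (hm : ∀ n ≥ m, (Jcells q (Set.Icc u v) n).Nonempty) :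
    Tendsto
      (fun n : ℕ => ((Jcells q (Set.Icc u v) n).ncard : ℝ) ^ (1 + r) *
        sSup ((fun a : ℝ =>
          |(cellMoment μ r ((q n) ⁻¹' {a}) a).toReal -
            Metric.diam ((q n) ⁻¹' {a}) ^ (1 + r) * h a * Qconst r|) ''
          Jcells q (Set.Icc u v) n))
      atTop (nhds 0) :=
  gersho_stmt_14_general μ r hr hmom h hμ hwu q hq u v huv hI
end
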